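/- arXiv:math/9906034 — 11 statements merged into one kernel-verified Lean document; each statement's English description precedes it below -/
import Mathlib

section
/- For any five points a, b, c, x, y in ℝ^n equipped with the ℓ1 norm, the 5-gonal (pentagonal) inequality holds: ‖x−y‖₁ + ‖a−b‖₁ + ‖a−c‖₁ + ‖b−c‖₁ ≤ ‖x−a‖₁ + ‖x−b‖₁ + ‖x−c‖₁ + ‖y−a‖₁ + ‖y−b‖₁ + ‖y−c‖₁. -/
/-!
On the line, one of `a, b, c` (say `b`) lies between the other two, so
`|a - b| + |a - c| + |b - c| = 2 |a - c|`. Each of `x` and `y` pays at least `|a - c|` to reach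
`a` and `c`, and what remains, `|x - b| + |y - b|`, pays for `|x - y|`. The ℓ1 inequality is the
sum of these one-dimensional inequalities over the coordinates.
-/

open Set
open scoped Interval

section LinearOrderedAddCommGroup

variable {α : Type*} [LinearOrder α]

theorem mem_uIcc_or_mem_uIcc_or_mem_uIcc (a b c : α) :
    b ∈ [[a, c]] ∨ a ∈ [[b, c]] ∨ c ∈ [[a, b]] := by
  simp only [mem_uIcc]
  grind

variable [AddCommGroup α] [IsOrderedAddMonoid α]

theorem abs_sub_add_abs_sub_of_mem_uIcc {a b c : α} (h : b ∈ [[a, c]]) :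
    |a - b| + |b - c| = |a - c| := by
  rcases mem_uIcc.1 h with ⟨hab, hbc⟩ | ⟨hcb, hba⟩
  · rw [abs_sub_comm a b, abs_sub_comm b c, abs_sub_comm a c, abs_of_nonneg (sub_nonneg.2 hab),
      abs_of_nonneg (sub_nonneg.2 hbc), abs_of_nonneg (sub_nonneg.2 (hab.trans hbc))]
    abel
  · rw [abs_of_nonneg (sub_nonneg.2 hba), abs_of_nonneg (sub_nonneg.2 hcb),
      abs_of_nonneg (sub_nonneg.2 (hcb.trans hba))]
    abel

theorem abs_sub_five_gonal_of_mem_uIcc {a b c : α} (x y : α) (h : b ∈ [[a, c]]) :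
    |x - y| + (|a - b| + |a - c| + |b - c|) ≤
      (|x - a| + |x - b| + |x - c|) + (|y - a| + |y - b| + |y - c|) := by
  have hxy : |x - y| ≤ |x - b| + |y - b| := abs_sub_comm y b ▸ abs_sub_le x b y
  have hx : |a - c| ≤ |x - a| + |x - c| := abs_sub_comm x a ▸ abs_sub_le a x c
  have hy : |a - c| ≤ |y - a| + |y - c| := abs_sub_comm y a ▸ abs_sub_le a y c
  calc |x - y| + (|a - b| + |a - c| + |b - c|) = |x - y| + |a - c| + |a - c| := by
        rw [← abs_sub_add_abs_sub_of_mem_uIcc h]; abel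
    _ ≤ (|x - b| + |y - b|) + (|x - a| + |x - c|) + (|y - a| + |y - c|) := by gcongr
    _ = (|x - a| + |x - b| + |x - c|) + (|y - a| + |y - b| + |y - c|) := by abel

theorem abs_sub_five_gonal (a b c x y : α) :
    |x - y| + (|a - b| + |a - c| + |b - c|) ≤
      (|x - a| + |x - b| + |x - c|) + (|y - a| + |y - b| + |y - c|) := by
  rcases mem_uIcc_or_mem_uIcc_or_mem_uIcc a b c with h | h | h
  · exact abs_sub_five_gonal_of_mem_uIcc x y h
  · have := abs_sub_five_gonal_of_mem_uIcc x y h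
    rw [abs_sub_comm b a] at this
    convert this using 2 <;> abel
  · have := abs_sub_five_gonal_of_mem_uIcc x y h
    rw [abs_sub_comm c b] at this
    convert this using 2 <;> abel

theorem sum_abs_sub_five_gonal {ι : Type*} (s : Finset ι) (a b c x y : ι → α) :
    (∑ i ∈ s, |x i - y i|) +
        ((∑ i ∈ s, |a i - b i|) + (∑ i ∈ s, |a i - c i|) + (∑ i ∈ s, |b i - c i|)) ≤
      ((∑ i ∈ s, |x i - a i|) + (∑ i ∈ s, |x i - b i|) + (∑ i ∈ s, |x i - c i|)) +
        ((∑ i ∈ s, |y i - a i|) + (∑ i ∈ s, |y i - b i|) + (∑ i ∈ s, |y i - c i|)) := by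
  simp only [← Finset.sum_add_distrib]
  exact Finset.sum_le_sum fun i _ => abs_sub_five_gonal (a i) (b i) (c i) (x i) (y i)

end LinearOrderedAddCommGroup

/-- The 5-gonal (pentagonal) inequality for the ℓ1 norm on ℝ^n. -/
theorem l1_five_gonal (n : ℕ) (a b c x y : Fin n → ℝ) :
    (∑ i, |x i - y i|) + ((∑ i, |a i - b i|) + (∑ i, |a i - c i|) + (∑ i, |b i - c i|)) ≤
      ((∑ i, |x i - a i|) + (∑ i, |x i - b i|) + (∑ i, |x i - c i|)) +
        ((∑ i, |y i - a i|) + (∑ i, |y i - b i|) + (∑ i, |y i - c i|)) :=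
  sum_abs_sub_five_gonal Finset.univ a b c x y
end

section
/- The ℓ1 metric on ℝ^n is hypermetric: for any m points x_1, …, x_m in ℝ^n and any integers b_1, …, b_m with b_1 + ⋯ + b_m = 1, one has Σ_{1 ≤ i < j ≤ m} b_i · b_j · ‖x_i − x_j‖₁ ≤ 0. -/
open MeasureTheory

noncomputable def chi (a : ℝ) (t : ℝ) : ℝ := if a ≤ t then 1 else 0

lemma chi_abs (a b : ℝ) (t : ℝ) :
    |chi a t - chi b t| = Set.indicator (Set.Ico (min a b) (max a b)) 1 t := by
  unfold chi
  rcases le_total a b with h | h <;>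
  · simp only [Set.indicator, Set.mem_Ico, min_def, max_def]
    split_ifs <;> simp_all <;> linarith

lemma integral_chi (a b : ℝ) : ∫ t, |chi a t - chi b t| = |a - b| := by
  rw [funext (chi_abs a b), MeasureTheory.integral_indicator_one measurableSet_Ico,
    Real.volume_real_Ico_of_le min_le_max]
  rcases le_total a b with h | h
  · rw [abs_of_nonpos (by linarith), min_eq_left h, max_eq_right h]; ring
  · rw [abs_of_nonneg (by linarith), min_eq_right h, max_eq_left h]

lemma chi_integrable (a b : ℝ) : Integrable (fun t => |chi a t - chi b t|) := by
  rw [funext (chi_abs a b)]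
  exact (integrable_indicator_iff measurableSet_Ico).2
    (integrableOn_const measure_Ico_lt_top.ne)

lemma inner_id {m : ℕ} (u v : Fin m → ℝ) (i : Fin m) :
    ∑ j, u i * u j * (v i + v j - 2 * v i * v j)
      = u i * v i * (∑ j, u j) + u i * (∑ j, u j * v j)
        - 2 * (u i * v i) * (∑ j, u j * v j) := by
  calc ∑ j, u i * u j * (v i + v j - 2 * v i * v j)
      = ∑ j, (u i * v i * u j + u i * (u j * v j) - 2 * (u i * v i) * (u j * v j)) := by
        apply Finset.sum_congr rfl; intros; ring
    _ = _ := by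
        rw [Finset.sum_sub_distrib, Finset.sum_add_distrib, ← Finset.mul_sum,
          ← Finset.mul_sum, ← Finset.mul_sum]

lemma double_sum_id {m : ℕ} (u v : Fin m → ℝ) (hu : ∑ i, u i = 1) :
    ∑ i, ∑ j, u i * u j * (v i + v j - 2 * v i * v j)
      = 2 * (∑ i, u i * v i) - 2 * (∑ i, u i * v i) ^ 2 := by
  set c := ∑ i, u i * v i with hc
  calc ∑ i, ∑ j, u i * u j * (v i + v j - 2 * v i * v j)
      = ∑ i, (u i * v i * 1 + u i * c - 2 * (u i * v i) * c) := by
        apply Finset.sum_congr rfl; intro i _; rw [inner_id, hu, ← hc]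
    _ = ∑ i, (u i * v i * (1 - 2 * c) + u i * c) := by
        apply Finset.sum_congr rfl; intros; ring
    _ = c * (1 - 2 * c) + 1 * c := by
        rw [Finset.sum_add_distrib, ← Finset.sum_mul, ← Finset.sum_mul, hu, ← hc]
    _ = 2 * c - 2 * c ^ 2 := by ring

lemma pointwise_nonpos {m : ℕ} (y : Fin m → ℝ) (b : Fin m → ℤ)
    (hb : ∑ i, b i = 1) (t : ℝ) :
    ∑ i, ∑ j, (b i : ℝ) * (b j : ℝ) * |chi (y i) t - chi (y j) t| ≤ 0 := by
  have key : ∀ i j : Fin m, |chi (y i) t - chi (y j) t|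
      = chi (y i) t + chi (y j) t - 2 * chi (y i) t * chi (y j) t := by
    intro i j; unfold chi; split_ifs <;> norm_num
  have hbs : ∑ i, (b i : ℝ) = 1 := by exact_mod_cast hb
  simp only [key]
  rw [double_sum_id _ _ hbs]
  set c := ∑ i, (b i : ℝ) * chi (y i) t with hc
  obtain ⟨N, hN⟩ : ∃ N : ℤ, c = (N : ℝ) := by
    refine ⟨∑ i, if y i ≤ t then b i else 0, ?_⟩
    rw [hc]; push_cast
    apply Finset.sum_congr rfl; intro i _; unfold chi; split_ifs <;> simp
  rw [hN]
  rcases le_or_gt N 0 with h | h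
  · have : (N : ℝ) ≤ 0 := by exact_mod_cast h
    nlinarith
  · have : (1 : ℝ) ≤ (N : ℝ) := by exact_mod_cast h
    nlinarith

lemma onedim {m : ℕ} (y : Fin m → ℝ) (b : Fin m → ℤ) (hb : ∑ i, b i = 1) :
    ∑ i, ∑ j, (b i : ℝ) * (b j : ℝ) * |y i - y j| ≤ 0 := by
  calc ∑ i, ∑ j, (b i : ℝ) * (b j : ℝ) * |y i - y j|
      = ∑ p : Fin m × Fin m,
          (b p.1 : ℝ) * (b p.2 : ℝ) * |y p.1 - y p.2| :=
        by exact (Fintype.sum_prod_type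
          (fun p : Fin m × Fin m => (b p.1 : ℝ) * (b p.2 : ℝ) * |y p.1 - y p.2|)).symm
    _ = ∑ p : Fin m × Fin m,
          ∫ t, (b p.1 : ℝ) * (b p.2 : ℝ) * |chi (y p.1) t - chi (y p.2) t| := by
        apply Finset.sum_congr rfl; intro p _
        rw [integral_const_mul, integral_chi]
    _ = ∫ t, ∑ p : Fin m × Fin m,
          (b p.1 : ℝ) * (b p.2 : ℝ) * |chi (y p.1) t - chi (y p.2) t| :=
        (integral_finset_sum _ fun p _ => (chi_integrable _ _).const_mul _).symm
    _ ≤ 0 := by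
        apply integral_nonpos
        intro t
        simpa [Fintype.sum_prod_type] using pointwise_nonpos y b hb t

/-- The ℓ1 metric on ℝ^n is hypermetric: for any m points and integers
`b i` summing to 1, the weighted sum over pairs of ℓ1 distances is nonpositive. -/
theorem l1_hypermetric (n m : ℕ) (x : Fin m → Fin n → ℝ) (b : Fin m → ℤ)
    (hb : ∑ i, b i = 1) :
    ∑ i : Fin m, ∑ j ∈ Finset.univ.filter (fun j => i < j),
      (b i : ℝ) * (b j : ℝ) * (∑ k, |x i k - x j k|) ≤ 0 := by
  have key : ∀ k : Fin n,
      ∑ i : Fin m, ∑ j ∈ Finset.univ.filter (fun j => i < j),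
        (b i : ℝ) * (b j : ℝ) * |x i k - x j k| ≤ 0 := by
    intro k
    have hfull := onedim (fun i => x i k) b hb
    have hsym : ∑ i : Fin m, ∑ j : Fin m, (b i : ℝ) * (b j : ℝ) * |x i k - x j k|
        = 2 * ∑ i : Fin m, ∑ j ∈ Finset.univ.filter (fun j => i < j),
            (b i : ℝ) * (b j : ℝ) * |x i k - x j k| := by
      have h1 : ∀ i : Fin m, ∑ j : Fin m, (b i : ℝ) * (b j : ℝ) * |x i k - x j k|
          = (∑ j ∈ Finset.univ.filter (fun j => i < j),
              (b i : ℝ) * (b j : ℝ) * |x i k - x j k|)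
            + ∑ j ∈ Finset.univ.filter (fun j => j < i),
              (b i : ℝ) * (b j : ℝ) * |x i k - x j k| := by
        intro i
        rw [← Finset.sum_filter_add_sum_filter_not Finset.univ (fun j => i < j)]
        congr 1
        rw [← Finset.sum_filter_add_sum_filter_not
          (Finset.univ.filter (fun j => ¬ i < j)) (fun j => j < i), Finset.filter_filter,
          Finset.filter_filter]
        have he : Finset.univ.filter (fun j : Fin m => ¬ i < j ∧ ¬ j < i) = {i} := by
          ext j
          simp only [Finset.mem_filter, Finset.mem_univ, true_and, Finset.mem_singleton]
          omega
        have he2 : Finset.univ.filter (fun j : Fin m => ¬ i < j ∧ j < i)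
            = Finset.univ.filter (fun j : Fin m => j < i) := by
          ext j
          simp only [Finset.mem_filter, Finset.mem_univ, true_and]
          omega
        rw [he, he2, Finset.sum_singleton]
        simp
      simp only [h1]
      rw [Finset.sum_add_distrib]
      have h2 : ∑ i : Fin m, ∑ j ∈ Finset.univ.filter (fun j => j < i),
            (b i : ℝ) * (b j : ℝ) * |x i k - x j k|
          = ∑ i : Fin m, ∑ j ∈ Finset.univ.filter (fun j => i < j),
            (b i : ℝ) * (b j : ℝ) * |x i k - x j k| := by
        rw [Finset.sum_sigma', Finset.sum_sigma']
        apply Finset.sum_nbij' (fun p => ⟨p.2, p.1⟩) (fun p => ⟨p.2, p.1⟩) <;>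
          simp [abs_sub_comm, mul_comm]
      rw [h2]; ring
    linarith
  calc ∑ i : Fin m, ∑ j ∈ Finset.univ.filter (fun j => i < j),
        (b i : ℝ) * (b j : ℝ) * (∑ k, |x i k - x j k|)
      = ∑ k : Fin n, ∑ i : Fin m, ∑ j ∈ Finset.univ.filter (fun j => i < j),
          (b i : ℝ) * (b j : ℝ) * |x i k - x j k| := by
        rw [Finset.sum_comm]
        apply Finset.sum_congr rfl; intro i _
        rw [Finset.sum_comm]
        apply Finset.sum_congr rfl; intro j _
        rw [Finset.mul_sum]
    _ ≤ 0 := Finset.sum_nonpos fun k _ => key k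
end

section
/- Let G be a connected simple graph that admits an embedding with scale λ (λ a positive natural number) into ℤ^n. Then the graph distance d_G satisfies the 5-gonal inequality: for all vertices a, b, c, x, y, d_G(x,y) + d_G(a,b) + d_G(a,c) + d_G(b,c) ≤ d_G(x,a) + d_G(x,b) + d_G(x,c) + d_G(y,a) + d_G(y,b) + d_G(y,c). -/
/-!
Each coordinate of an embedding into `ℤ^n` is a map to the line `ℤ`, where the 5-gonal
inequality can be checked directly. Summing over the coordinates gives it for the `ℓ¹`
distance, which is `λ` times the graph distance, and dividing by `λ > 0` gives it for `d_G`.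
-/

theorem Int.abs_five_gonal (p q r s t : ℤ) :
    |s - t| + |p - q| + |p - r| + |q - r| ≤
      |s - p| + |s - q| + |s - r| + |t - p| + |t - q| + |t - r| := by
  simp only [Int.abs_eq_natAbs]
  omega

theorem Finset.sum_abs_five_gonal {ι : Type*} (I : Finset ι) (p q r s t : ι → ℤ) :
    ∑ i ∈ I, |s i - t i| + ∑ i ∈ I, |p i - q i| + ∑ i ∈ I, |p i - r i| + ∑ i ∈ I, |q i - r i| ≤
      ∑ i ∈ I, |s i - p i| + ∑ i ∈ I, |s i - q i| + ∑ i ∈ I, |s i - r i| +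
        ∑ i ∈ I, |t i - p i| + ∑ i ∈ I, |t i - q i| + ∑ i ∈ I, |t i - r i| := by
  simp only [← Finset.sum_add_distrib]
  exact Finset.sum_le_sum fun i _ => Int.abs_five_gonal (p i) (q i) (r i) (s i) (t i)

theorem five_gonal_of_scale_embedding_general {V : Type*} (G : SimpleGraph V)
    (lam n : ℕ) (hlam : 0 < lam) (f : V → Fin n → ℤ)
    (hf : ∀ u v : V, (lam : ℤ) * (G.dist u v : ℤ) = ∑ i, |f u i - f v i|)
    (a b c x y : V) :
    G.dist x y + G.dist a b + G.dist a c + G.dist b c ≤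
      G.dist x a + G.dist x b + G.dist x c + G.dist y a + G.dist y b + G.dist y c := by
  have hsum := Finset.univ.sum_abs_five_gonal (f a) (f b) (f c) (f x) (f y)
  simp only [← hf] at hsum
  have hscaled : (lam : ℤ) * ((G.dist x y + G.dist a b + G.dist a c + G.dist b c : ℕ) : ℤ) ≤
      (lam : ℤ) * ((G.dist x a + G.dist x b + G.dist x c + G.dist y a + G.dist y b +
        G.dist y c : ℕ) : ℤ) := by
    push_cast
    linarith
  exact_mod_cast le_of_mul_le_mul_left hscaled (by exact_mod_cast hlam)

/-- If a connected simple graph admits an embedding with scale λ > 0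
into `ℤ^n`, then its graph distance satisfies the 5-gonal inequality. -/
theorem five_gonal_of_scale_embedding {V : Type*} (G : SimpleGraph V) (hG : G.Connected)
    (lam n : ℕ) (hlam : 0 < lam) (f : V → Fin n → ℤ)
    (hf : ∀ u v : V, (lam : ℤ) * (G.dist u v : ℤ) = ∑ i, |f u i - f v i|)
    (a b c x y : V) :
    G.dist x y + G.dist a b + G.dist a c + G.dist b c ≤
      G.dist x a + G.dist x b + G.dist x c + G.dist y a + G.dist y b + G.dist y c :=
  five_gonal_of_scale_embedding_general G lam n hlam f hf a b c x y
end

section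
/- For every m ≥ 2, the even cycle graph C_{2m} admits an embedding with scale 1 into ℤ^m in which every coordinate of the image of every vertex lies in {0,1} (i.e., C_{2m} embeds isometrically into the hypercube H_m). -/
/-- The cycle graph on `ZMod k`: `i` is adjacent to `i ± 1`. -/
def cycleGraph (k : ℕ) : SimpleGraph (ZMod k) :=
  SimpleGraph.fromRel (fun i j => i = j + 1)

def Fc (m a : ℕ) (i : Fin m) : ℤ := if (i : ℕ) < a ∧ a ≤ (i : ℕ) + m then 1 else 0

lemma count (m a b : ℕ) (ha : a < 2*m) (hb : b ≤ 2*m) (hab : a ≤ b) :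
    ∑ i : Fin m, |Fc m a i - Fc m b i|
      = ((min (b - a) (2*m - (b - a)) : ℕ) : ℤ) := by
  have hterm : ∀ i : Fin m, |Fc m a i - Fc m b i|
      = if (((i:ℕ) < a ∧ a ≤ (i:ℕ) + m) ∧ ¬((i:ℕ) < b ∧ b ≤ (i:ℕ) + m))
          ∨ (((i:ℕ) < b ∧ b ≤ (i:ℕ) + m) ∧ ¬((i:ℕ) < a ∧ a ≤ (i:ℕ) + m))
        then 1 else 0 := by
    intro i
    unfold Fc
    split_ifs <;> simp_all <;> omega
  rw [Finset.sum_congr rfl (fun i _ => hterm i)]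
  rw [Fin.sum_univ_eq_sum_range (fun i =>
    if ((i < a ∧ a ≤ i + m) ∧ ¬(i < b ∧ b ≤ i + m))
      ∨ ((i < b ∧ b ≤ i + m) ∧ ¬(i < a ∧ a ≤ i + m)) then (1:ℤ) else 0)]
  rw [Finset.sum_boole]
  rcases le_or_gt (b - a) m with h | h
  · have hset : (Finset.range m).filter (fun i =>
        ((i < a ∧ a ≤ i + m) ∧ ¬(i < b ∧ b ≤ i + m))
          ∨ ((i < b ∧ b ≤ i + m) ∧ ¬(i < a ∧ a ≤ i + m)))
        = Finset.Ico (a - m) (b - m) ∪ Finset.Ico (min a m) (min b m) := by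
      ext i
      simp only [Finset.mem_filter, Finset.mem_range, Finset.mem_union, Finset.mem_Ico]
      omega
    rw [hset, Finset.card_union_of_disjoint (by
      rw [Finset.disjoint_left]
      intro i hi hi'
      simp only [Finset.mem_Ico] at hi hi'
      omega)]
    simp only [Nat.card_Ico]
    push_cast
    omega
  · have hset : (Finset.range m).filter (fun i =>
        ((i < a ∧ a ≤ i + m) ∧ ¬(i < b ∧ b ≤ i + m))
          ∨ ((i < b ∧ b ≤ i + m) ∧ ¬(i < a ∧ a ≤ i + m)))
        = Finset.Ico 0 a ∪ Finset.Ico (b - m) m := by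
      ext i
      simp only [Finset.mem_filter, Finset.mem_range, Finset.mem_union, Finset.mem_Ico]
      omega
    rw [hset, Finset.card_union_of_disjoint (by
      rw [Finset.disjoint_left]
      intro i hi hi'
      simp only [Finset.mem_Ico] at hi hi'
      omega)]
    simp only [Nat.card_Ico]
    push_cast
    omega

lemma Dsymm (m a b : ℕ) : ∑ i : Fin m, |Fc m a i - Fc m b i| = ∑ i : Fin m, |Fc m b i - Fc m a i| := by
  exact Finset.sum_congr rfl fun i _ => abs_sub_comm _ _

lemma Dfull (m a b : ℕ) (ha : a < 2*m) (hb : b < 2*m) :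
    ∑ i : Fin m, |Fc m a i - Fc m b i|
      = ((min (max a b - min a b) (2*m - (max a b - min a b)) : ℕ) : ℤ) := by
  rcases le_total a b with hab | hab
  · rw [count m a b ha hb.le hab, max_eq_right hab, min_eq_left hab]
  · rw [Dsymm, count m b a hb ha.le hab, max_eq_left hab, min_eq_right hab]

lemma adj_succ (m : ℕ) (hm : 2 ≤ m) (u : ZMod (2*m)) : (cycleGraph (2*m)).Adj u (u + 1) := by
  haveI : NeZero (2*m) := ⟨by omega⟩
  haveI : Fact (1 < 2*m) := ⟨by omega⟩
  constructor
  · intro h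
    have h1 : (1 : ZMod (2*m)).val = 1 := ZMod.val_one _
    have := congrArg ZMod.val h
    rw [ZMod.val_add] at this
    have hlt : u.val < 2*m := ZMod.val_lt u
    rw [h1] at this
    rcases Nat.lt_or_ge (u.val + 1) (2*m) with hc | hc
    · rw [Nat.mod_eq_of_lt hc] at this; omega
    · have he : u.val + 1 = 2*m := by omega
      rw [he, Nat.mod_self] at this; omega
  · right; rfl

lemma walk_exists (m : ℕ) (hm : 2 ≤ m) (u : ZMod (2*m)) (n : ℕ) :
    ∃ w : (cycleGraph (2*m)).Walk u (u + (n : ZMod (2*m))), w.length = n := by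
  induction n with
  | zero => exact ⟨SimpleGraph.Walk.nil.copy rfl (by simp), by simp⟩
  | succ n ih =>
    obtain ⟨w, hw⟩ := ih
    have hadj := adj_succ m hm (u + (n : ZMod (2*m)))
    have heq : u + ((n + 1 : ℕ) : ZMod (2*m)) = u + (n : ZMod (2*m)) + 1 := by
      push_cast; ring
    refine ⟨(w.concat hadj).copy rfl heq.symm, ?_⟩
    simp [SimpleGraph.Walk.length_concat, hw]

lemma dist_ub (m : ℕ) (hm : 2 ≤ m) (u v : ZMod (2*m)) (hab : u.val ≤ v.val) :
    (cycleGraph (2*m)).dist u v ≤ min (v.val - u.val) (2*m - (v.val - u.val)) := by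
  haveI : NeZero (2*m) := ⟨by omega⟩
  have ha : ((u.val : ℕ) : ZMod (2*m)) = u := ZMod.natCast_zmod_val u
  have hb : ((v.val : ℕ) : ZMod (2*m)) = v := ZMod.natCast_zmod_val v
  refine le_min ?_ ?_
  · obtain ⟨w, hw⟩ := walk_exists m hm u (v.val - u.val)
    have he : u + ((v.val - u.val : ℕ) : ZMod (2*m)) = v := by
      rw [Nat.cast_sub hab, ha, hb]; ring
    have := SimpleGraph.dist_le (w.copy rfl he)
    simpa [hw] using this
  · obtain ⟨w, hw⟩ := walk_exists m hm v (2*m - (v.val - u.val))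
    have hsub : v.val - u.val ≤ 2*m := by
      have := ZMod.val_lt v; omega
    have he : v + ((2*m - (v.val - u.val) : ℕ) : ZMod (2*m)) = u := by
      rw [Nat.cast_sub hsub, Nat.cast_sub hab, ha, hb]
      simp
    have := SimpleGraph.dist_le (w.copy rfl he)
    rw [SimpleGraph.dist_comm]
    simpa [hw] using this

lemma adjD (m : ℕ) (hm : 2 ≤ m) (u v : ZMod (2*m)) (h : (cycleGraph (2*m)).Adj u v) :
    ∑ i : Fin m, |Fc m u.val i - Fc m v.val i| = 1 := by
  haveI : NeZero (2*m) := ⟨by omega⟩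
  haveI : Fact (1 < 2*m) := ⟨by omega⟩
  have key : ∀ x y : ZMod (2*m), y = x + 1 →
      ∑ i : Fin m, |Fc m x.val i - Fc m y.val i| = 1 := by
    intro x y hxy
    have hx := ZMod.val_lt x
    have hy := ZMod.val_lt y
    have hv : y.val = (x.val + 1) % (2*m) := by
      rw [hxy, ZMod.val_add, ZMod.val_one]
    rw [Dfull m x.val y.val hx hy]
    norm_cast
    rcases Nat.lt_or_ge (x.val + 1) (2*m) with hc | hc
    · rw [Nat.mod_eq_of_lt hc] at hv; omega
    · have he : x.val + 1 = 2*m := by omega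
      rw [he, Nat.mod_self] at hv
      omega
  rcases h.2 with h1 | h1
  · rw [Dsymm]; exact key v u h1
  · exact key u v h1

lemma walk_lb (m : ℕ) (hm : 2 ≤ m) : ∀ {u v : ZMod (2*m)} (w : (cycleGraph (2*m)).Walk u v),
    ∑ i : Fin m, |Fc m u.val i - Fc m v.val i| ≤ (w.length : ℤ) := by
  intro u v w
  induction w with
  | nil => simp
  | @cons u u' v h p ih =>
    have tri : ∑ i : Fin m, |Fc m u.val i - Fc m v.val i|
        ≤ (∑ i : Fin m, |Fc m u.val i - Fc m u'.val i|)
          + ∑ i : Fin m, |Fc m u'.val i - Fc m v.val i| := by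
      rw [← Finset.sum_add_distrib]
      exact Finset.sum_le_sum fun i _ => abs_sub_le _ _ _
    calc ∑ i : Fin m, |Fc m u.val i - Fc m v.val i| ≤ _ := tri
      _ ≤ 1 + p.length := by rw [adjD m hm u u' h]; exact add_le_add_right ih 1
      _ = ((p.cons h).length : ℤ) := by simp [SimpleGraph.Walk.length_cons]; ring

lemma dist_eq (m : ℕ) (hm : 2 ≤ m) (u v : ZMod (2*m)) :
    ((cycleGraph (2*m)).dist u v : ℤ) = ∑ i : Fin m, |Fc m u.val i - Fc m v.val i| := by
  haveI : NeZero (2*m) := ⟨by omega⟩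
  have hx := ZMod.val_lt u
  have hy := ZMod.val_lt v
  have hreach : (cycleGraph (2*m)).Reachable u v := by
    obtain ⟨w, _⟩ := walk_exists m hm u (v - u).val
    have he : u + (((v - u).val : ℕ) : ZMod (2*m)) = v := by
      rw [ZMod.natCast_zmod_val]; ring
    exact ⟨w.copy rfl he⟩
  obtain ⟨w, hw⟩ := hreach.exists_walk_length_eq_dist
  have hlb := walk_lb m hm w
  rw [hw] at hlb
  have hub : (cycleGraph (2*m)).dist u v
      ≤ min (max u.val v.val - min u.val v.val) (2*m - (max u.val v.val - min u.val v.val)) := by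
    rcases le_total u.val v.val with hab | hab
    · have := dist_ub m hm u v hab
      rwa [max_eq_right hab, min_eq_left hab]
    · rw [max_eq_left hab, min_eq_right hab, SimpleGraph.dist_comm]
      exact dist_ub m hm v u hab
  rw [Dfull m u.val v.val hx hy] at hlb ⊢
  have : min (max u.val v.val - min u.val v.val) (2*m - (max u.val v.val - min u.val v.val))
      ≤ (cycleGraph (2*m)).dist u v := by exact_mod_cast hlb
  omega


/-- For `m ≥ 2`, the even cycle `C_{2m}` embeds isometrically (scale 1)
into the hypercube `H_m ⊆ ℤ^m` (all coordinates in `{0,1}`). -/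
theorem even_cycle_embeds_hypercube (m : ℕ) (hm : 2 ≤ m) :
    ∃ f : ZMod (2 * m) → Fin m → ℤ,
      (∀ v i, f v i = 0 ∨ f v i = 1) ∧
      ∀ u v : ZMod (2 * m),
        ((cycleGraph (2 * m)).dist u v : ℤ) = ∑ i, |f u i - f v i| := by
  refine ⟨fun v i => Fc m v.val i, ?_, ?_⟩
  · intro v i
    show Fc m v.val i = 0 ∨ Fc m v.val i = 1
    unfold Fc
    split_ifs <;> simp
  · intro u v
    exact dist_eq m hm u v
end

section
/- For every m ≥ 1, the odd cycle graph C_{2m+1} admits an embedding with scale 2 into ℤ^{2m+1} in which every coordinate of the image of every vertex lies in {0,1} (i.e., C_{2m+1} embeds with scale 2 into the hypercube H_{2m+1}). -/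
/-!
Vertex `u` of `C_{2m+1}` is sent to the indicator vector of the arc `u, u + 1, …, u + m - 1`.
Arcs starting `k ≤ m` apart differ in exactly `2k` coordinates; in particular adjacent vertices
are sent `2` apart, so the map is `2`-Lipschitz for the graph metric. Since `u` and `u + k` are
joined by a walk of length `k`, their graph distance is exactly `k`, and every pair of vertices
has the form `u, u ± k` with `k ≤ m`.
-/

open Finset

theorem SimpleGraph.Walk.sum_abs_sub_le_mul_length {V ι : Type*} [Fintype ι] {G : SimpleGraph V}
    (f : V → ι → ℤ) {c : ℤ} (hf : ∀ a b, G.Adj a b → ∑ i, |f a i - f b i| ≤ c) {u v : V}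
    (w : G.Walk u v) : ∑ i, |f u i - f v i| ≤ c * w.length := by
  induction w with
  | nil => simp
  | @cons a b _ hab p ih =>
    calc ∑ i, |f a i - f _ i| ≤ ∑ i, (|f a i - f b i| + |f b i - f _ i|) :=
          sum_le_sum fun i _ => abs_sub_le _ _ _
      _ ≤ c + c * p.length := by rw [sum_add_distrib]; exact add_le_add (hf a b hab) ih
      _ = c * (cons hab p).length := by rw [Walk.length_cons]; push_cast; ring

theorem SimpleGraph.Reachable.sum_abs_sub_le_mul_dist {V ι : Type*} [Fintype ι]
    {G : SimpleGraph V} (f : V → ι → ℤ) {c : ℤ}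
    (hf : ∀ a b, G.Adj a b → ∑ i, |f a i - f b i| ≤ c) {u v : V} (h : G.Reachable u v) :
    ∑ i, |f u i - f v i| ≤ c * G.dist u v := by
  obtain ⟨p, hp⟩ := h.exists_walk_length_eq_dist
  exact hp ▸ p.sum_abs_sub_le_mul_length f hf

theorem cycleGraph_exists_walk_add_natCast {n : ℕ} (u : ZMod n) (d : ℕ) :
    ∃ w : (cycleGraph n).Walk u (u + d), w.length ≤ d := by
  induction d with
  | zero => exact ⟨SimpleGraph.Walk.nil.copy rfl (by simp), by simp⟩
  | succ d ih =>
    obtain ⟨w, hw⟩ := ih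
    have hend : u + d + 1 = u + (d + 1 : ℕ) := by push_cast; ring
    -- `u + d + 1 = u + d` happens only for `n = 1`
    by_cases hloop : u + d = u + d + 1
    · exact ⟨w.copy rfl (hloop.trans hend), by simp; omega⟩
    · have hadj : (cycleGraph n).Adj (u + d) (u + d + 1) := by simp [cycleGraph, hloop]
      exact ⟨(w.concat hadj).copy rfl hend, by simp; omega⟩

theorem ZMod.sum_val_eq_sum_range {M : Type*} [AddCommMonoid M] {n : ℕ} [NeZero n]
    (g : ℕ → M) : ∑ x : ZMod n, g x.val = ∑ t ∈ range n, g t :=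
  sum_nbij' ZMod.val Nat.cast (by simp [ZMod.val_lt]) (by simp)
    (by simp) (by simp +contextual [Nat.mod_eq_of_lt]) (by simp)

theorem ZMod.exists_le_eq_natCast_or_eq_neg {m : ℕ} (a : ZMod (2 * m + 1)) :
    ∃ k ≤ m, a = k ∨ a = -k := by
  by_cases ha : a.val ≤ m
  · exact ⟨a.val, ha, .inl (ZMod.natCast_zmod_val a).symm⟩
  · refine ⟨(-a).val, ?_, .inr (by rw [ZMod.natCast_zmod_val, neg_neg])⟩
    have : a ≠ 0 := by rintro rfl; simp at ha
    rw [ZMod.neg_val, if_neg this]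
    have := ZMod.val_lt a
    omega

theorem sum_range_abs_sub_shift_indicator {m k : ℕ} (hk : k ≤ m) :
    ∑ t ∈ range (2 * m + 1),
      |(if (t + k) % (2 * m + 1) < m then 1 else 0 : ℤ) - if t < m then 1 else 0| = 2 * k := by
  have hmod : ∀ t < 2 * m + 1,
      (t + k) % (2 * m + 1) = if t + k < 2 * m + 1 then t + k else t + k - (2 * m + 1) := by
    intro t ht
    split_ifs with h
    · exact Nat.mod_eq_of_lt h
    · rw [Nat.mod_eq_sub_mod (by omega), Nat.mod_eq_of_lt (by omega)]
  calc _ = ∑ t ∈ range (2 * m + 1),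
          if t ∈ Ico (m - k) m ∪ Ico (2 * m + 1 - k) (2 * m + 1) then (1 : ℤ) else 0 := by
        refine sum_congr rfl fun t ht => ?_
        rw [mem_range] at ht
        rw [hmod t ht]
        simp only [mem_union, mem_Ico]
        split_ifs <;> simp <;> omega
    _ = 2 * k := by
        rw [sum_ite_mem, inter_eq_right.2 (by intro t; simp; omega), sum_const,
          card_union_of_disjoint (disjoint_left.2 (by simp; omega))]
        simp; omega

def arcEmbedding (m : ℕ) (u : ZMod (2 * m + 1)) (i : Fin (2 * m + 1)) : ℤ :=
  if (((i : ℕ) : ZMod (2 * m + 1)) - u).val < m then 1 else 0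

theorem sum_abs_sub_arcEmbedding_add_natCast {m k : ℕ} (hk : k ≤ m) (u : ZMod (2 * m + 1)) :
    ∑ i, |arcEmbedding m u i - arcEmbedding m (u + k) i| = 2 * k := by
  have hkval : (k : ZMod (2 * m + 1)).val = k := ZMod.val_cast_of_lt (by omega)
  let g : ZMod (2 * m + 1) → ℤ := fun x =>
    |(if (x - u).val < m then 1 else 0) - if (x - (u + k)).val < m then 1 else 0|
  calc ∑ i, |arcEmbedding m u i - arcEmbedding m (u + k) i|
      = ∑ t ∈ range (2 * m + 1), g t := Fin.sum_univ_eq_sum_range (fun t => g t) _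
    _ = ∑ x : ZMod (2 * m + 1), g x := by
        rw [← ZMod.sum_val_eq_sum_range]; simp only [ZMod.natCast_zmod_val]
    _ = ∑ x : ZMod (2 * m + 1), g (x + (u + k)) := (Equiv.sum_comp (Equiv.addRight _) g).symm
    _ = ∑ x : ZMod (2 * m + 1),
          |(if (x.val + k) % (2 * m + 1) < m then 1 else 0 : ℤ) - if x.val < m then 1 else 0| := by
        refine sum_congr rfl fun x _ => ?_
        dsimp only [g]
        rw [add_sub_cancel_right, show x + (u + k) - u = x + k by abel, ZMod.val_add, hkval]
    _ = 2 * k := (ZMod.sum_val_eq_sum_range _).trans (sum_range_abs_sub_shift_indicator hk)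

theorem sum_abs_sub_arcEmbedding_le_of_adj {m : ℕ} (hm : 1 ≤ m) {a b : ZMod (2 * m + 1)}
    (hab : (cycleGraph (2 * m + 1)).Adj a b) :
    ∑ i, |arcEmbedding m a i - arcEmbedding m b i| ≤ 2 := by
  have hone := sum_abs_sub_arcEmbedding_add_natCast hm
  rw [Nat.cast_one] at hone
  obtain ⟨-, rfl | rfl⟩ := SimpleGraph.fromRel_adj _ _ _ |>.1 hab
  · simp_rw [abs_sub_comm (arcEmbedding m (b + 1) _)]
    exact (hone b).le
  · exact (hone a).le

theorem cycleGraph_dist_add_natCast {m k : ℕ} (hk : k ≤ m) (u : ZMod (2 * m + 1)) :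
    (cycleGraph (2 * m + 1)).dist u (u + k) = k := by
  obtain ⟨w, hw⟩ := cycleGraph_exists_walk_add_natCast u k
  refine le_antisymm ((SimpleGraph.dist_le w).trans hw) ?_
  rcases Nat.eq_zero_or_pos k with rfl | hk0
  · exact Nat.zero_le _
  have := w.reachable.sum_abs_sub_le_mul_dist (arcEmbedding m)
    (fun a b => sum_abs_sub_arcEmbedding_le_of_adj (hk0.trans_le hk))
  rw [sum_abs_sub_arcEmbedding_add_natCast hk] at this
  omega

theorem odd_cycle_embeds_hypercube_general (m : ℕ) :
    ∃ f : ZMod (2 * m + 1) → Fin (2 * m + 1) → ℤ,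
      (∀ v i, f v i = 0 ∨ f v i = 1) ∧
      ∀ u v : ZMod (2 * m + 1),
        2 * ((cycleGraph (2 * m + 1)).dist u v : ℤ) = ∑ i, |f u i - f v i| := by
  refine ⟨arcEmbedding m, fun v i => by unfold arcEmbedding; split_ifs <;> simp, fun u v => ?_⟩
  obtain ⟨k, hk, hvu | hvu⟩ := ZMod.exists_le_eq_natCast_or_eq_neg (v - u)
  · obtain rfl : v = u + k := by linear_combination hvu
    rw [cycleGraph_dist_add_natCast hk, sum_abs_sub_arcEmbedding_add_natCast hk]
  · obtain rfl : u = v + k := by linear_combination -hvu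
    rw [SimpleGraph.dist_comm, cycleGraph_dist_add_natCast hk,
      ← sum_abs_sub_arcEmbedding_add_natCast hk v]
    exact sum_congr rfl fun i _ => abs_sub_comm _ _

/-- For `m ≥ 1`, the odd cycle `C_{2m+1}` embeds with scale 2
into the hypercube `H_{2m+1} ⊆ ℤ^{2m+1}` (all coordinates in `{0,1}`). -/
theorem odd_cycle_embeds_hypercube (m : ℕ) (hm : 1 ≤ m) :
    ∃ f : ZMod (2 * m + 1) → Fin (2 * m + 1) → ℤ,
      (∀ v i, f v i = 0 ∨ f v i = 1) ∧
      ∀ u v : ZMod (2 * m + 1),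
        2 * ((cycleGraph (2 * m + 1)).dist u v : ℤ) = ∑ i, |f u i - f v i| :=
  odd_cycle_embeds_hypercube_general m
end

section
/- For every m ≥ 1, the prism graph over an odd cycle, i.e., the Cartesian product C_{2m+1} □ K_2, admits an embedding with scale 2 into ℤ^{2m+3} in which every coordinate of the image of every vertex lies in {0,1} (i.e., the odd prism Prism_n with n = 2m+1 embeds with scale 2 into the hypercube H_{n+2}). -/
namespace OddPrismAux

open Finset

/-- cycle coordinate -/
def c (m : ℕ) (j t : ZMod (2*m+1)) : ℤ := if (t - j).val < m then 1 else 0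

/-- the embedding -/
def F (m : ℕ) (v : ZMod (2*m+1) × Fin 2) (i : Fin (2*m+3)) : ℤ :=
  if _ : (i : ℕ) < 2*m+1 then c m v.1 (((i : ℕ) : ZMod (2*m+1))) else ((v.2 : ℕ) : ℤ)

lemma mod_char (m d s : ℕ) (hs : s < 2*m+1) (hd1 : 1 ≤ d) (hdm : d ≤ m)
    : (s + (2*m+1 - d)) % (2*m+1) < m ↔ (d ≤ s ∧ s < m + d) := by
  rcases lt_or_ge s d with h | h
  · rw [Nat.mod_eq_of_lt (by omega)]; omega
  · have hh : s + (2*m+1 - d) = (s - d) + (2*m+1) := by omega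
    rw [hh, Nat.add_mod_right, Nat.mod_eq_of_lt (by omega)]
    omega

lemma range_count (m d : ℕ) (hd1 : 1 ≤ d) (hdm : d ≤ m) :
    (∑ s ∈ Finset.range (2*m+1),
      if (s < d ∨ (m ≤ s ∧ s < m + d)) then (1:ℤ) else 0) = 2*d := by
  rw [Finset.sum_boole]
  have h : (Finset.range (2*m+1)).filter (fun s => s < d ∨ (m ≤ s ∧ s < m + d)) =
      Finset.range d ∪ Finset.Ico m (m + d) := by
    ext s
    simp only [Finset.mem_filter, Finset.mem_range, Finset.mem_union, Finset.mem_Ico]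
    omega
  rw [h, Finset.card_union_of_disjoint, Finset.card_range, Nat.card_Ico]
  · push_cast; ring_nf; omega
  · rw [Finset.disjoint_left]
    intro a ha hb
    simp only [Finset.mem_range] at ha
    simp only [Finset.mem_Ico] at hb
    omega

lemma zmod_sum_range (n : ℕ) [NeZero n] (G : ZMod n → ℤ) :
    ∑ t : ZMod n, G t = ∑ s ∈ Finset.range n, G (s : ZMod n) := by
  refine Finset.sum_nbij' (fun t => (ZMod.val t)) (fun s => (s : ZMod n)) ?_ ?_ ?_ ?_ ?_
  · intro a _; simpa using ZMod.val_lt a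
  · intro a _; simp
  · intro a _; exact ZMod.natCast_rightInverse a
  · intro a ha; exact ZMod.val_cast_of_lt (Finset.mem_range.mp ha)
  · intro a _; rw [ZMod.natCast_rightInverse a]

lemma zmod_hamming (m : ℕ) (hm : 1 ≤ m) (j k : ZMod (2*m+1)) (hd : (k - j).val ≤ m) :
    ∑ t : ZMod (2*m+1), |c m j t - c m k t| = 2 * ((k - j).val : ℤ) := by
  rcases eq_or_ne k j with rfl | hne
  · simp
  have hx : k - j ≠ 0 := sub_ne_zero.mpr hne
  set d : ℕ := (k - j).val with hdd
  have hd1 : 1 ≤ d := by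
    rcases Nat.eq_zero_or_pos d with h0 | h
    · exact absurd ((ZMod.val_eq_zero _).mp h0) hx
    · exact h
  -- reindex t ↦ t + j
  have hre : ∑ t : ZMod (2*m+1), |c m j t - c m k t|
      = ∑ t : ZMod (2*m+1), |c m j (t + j) - c m k (t + j)| := by
    exact (Fintype.sum_equiv (Equiv.addRight j)
      (fun t => |c m j (t + j) - c m k (t + j)|)
      (fun t => |c m j t - c m k t|) (fun t => rfl)).symm
  rw [hre]
  have hpt : ∀ t : ZMod (2*m+1), |c m j (t + j) - c m k (t + j)|
      = if (t.val < d ∨ (m ≤ t.val ∧ t.val < m + d)) then (1:ℤ) else 0 := by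
    intro t
    have h1 : t + j - j = t := by ring
    have h2 : t + j - k = t + (-(k - j)) := by ring
    have hnv : (-(k - j)).val = 2*m+1 - d := by
      rw [ZMod.neg_val, if_neg hx]
    have h3 : (t + (-(k - j))).val = (t.val + (2*m+1 - d)) % (2*m+1) := by
      rw [ZMod.val_add, hnv]
    have hBc : (t + j - k).val < m ↔ (d ≤ t.val ∧ t.val < m + d) := by
      rw [h2, h3]
      exact mod_char m d t.val (ZMod.val_lt t) hd1 hd
    unfold c
    rw [h1]
    by_cases hA : t.val < m <;> by_cases hB : (d ≤ t.val ∧ t.val < m + d)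
    · rw [if_pos hA, if_pos (hBc.mpr hB), if_neg (by omega)]; simp
    · rw [if_pos hA, if_neg (fun hh => hB (hBc.mp hh)), if_pos (by omega)]; simp
    · rw [if_neg hA, if_pos (hBc.mpr hB), if_pos (by omega)]; simp
    · rw [if_neg hA, if_neg (fun hh => hB (hBc.mp hh)), if_neg (by omega)]; simp
  calc ∑ t : ZMod (2*m+1), |c m j (t + j) - c m k (t + j)|
      = ∑ t : ZMod (2*m+1),
        (if (t.val < d ∨ (m ≤ t.val ∧ t.val < m + d)) then (1:ℤ) else 0) :=
        Finset.sum_congr rfl (fun t _ => hpt t)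
    _ = ∑ s ∈ Finset.range (2*m+1),
        (if (((s : ZMod (2*m+1))).val < d ∨ (m ≤ ((s : ZMod (2*m+1))).val ∧
          ((s : ZMod (2*m+1))).val < m + d)) then (1:ℤ) else 0) :=
        zmod_sum_range _ _
    _ = ∑ s ∈ Finset.range (2*m+1),
        (if (s < d ∨ (m ≤ s ∧ s < m + d)) then (1:ℤ) else 0) := by
        refine Finset.sum_congr rfl (fun s hs => ?_)
        rw [ZMod.val_cast_of_lt (Finset.mem_range.mp hs)]
    _ = 2 * (d : ℤ) := range_count m d hd1 hd

lemma fin2_abs (a b : Fin 2) :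
    |((a : ℕ) : ℤ) - ((b : ℕ) : ℤ)| = if a = b then 0 else 1 := by
  fin_cases a <;> fin_cases b <;> simp

lemma hamming_eq (m : ℕ) (hm : 1 ≤ m) (j k : ZMod (2*m+1)) (a b : Fin 2)
    (hd : (k - j).val ≤ m) :
    ∑ i : Fin (2*m+3), |F m (j,a) i - F m (k,b) i|
      = 2 * ((k - j).val : ℤ) + (if a = b then 0 else 2) := by
  have step1 : ∑ i : Fin (2*m+3), |F m (j,a) i - F m (k,b) i|
      = (∑ i : Fin (2*m+2), |F m (j,a) i.castSucc - F m (k,b) i.castSucc|)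
        + |F m (j,a) (Fin.last (2*m+2)) - F m (k,b) (Fin.last (2*m+2))| :=
    Fin.sum_univ_castSucc (n := 2*m+2) _
  have step2 : ∑ i : Fin (2*m+2), |F m (j,a) i.castSucc - F m (k,b) i.castSucc|
      = (∑ i : Fin (2*m+1),
          |F m (j,a) i.castSucc.castSucc - F m (k,b) i.castSucc.castSucc|)
        + |F m (j,a) (Fin.last (2*m+1)).castSucc - F m (k,b) (Fin.last (2*m+1)).castSucc| :=
    Fin.sum_univ_castSucc (n := 2*m+1) _
  have hlast1 : |F m (j,a) (Fin.last (2*m+2)) - F m (k,b) (Fin.last (2*m+2))|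
      = if a = b then 0 else 1 := by
    unfold F
    rw [dif_neg (by simp only [Fin.val_last]; omega), dif_neg (by simp only [Fin.val_last]; omega)]
    exact fin2_abs a b
  have hlast2 : |F m (j,a) (Fin.last (2*m+1)).castSucc - F m (k,b) (Fin.last (2*m+1)).castSucc|
      = if a = b then 0 else 1 := by
    unfold F
    rw [dif_neg (by simp only [Fin.coe_castSucc, Fin.val_last]; omega), dif_neg (by simp only [Fin.coe_castSucc, Fin.val_last]; omega)]
    exact fin2_abs a b
  have hmain : ∑ i : Fin (2*m+1),
      |F m (j,a) i.castSucc.castSucc - F m (k,b) i.castSucc.castSucc|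
      = 2 * ((k - j).val : ℤ) := by
    have : ∀ i : Fin (2*m+1),
        |F m (j,a) i.castSucc.castSucc - F m (k,b) i.castSucc.castSucc|
        = |c m j (((i : ℕ) : ZMod (2*m+1))) - c m k (((i : ℕ) : ZMod (2*m+1)))| := by
      intro i
      unfold F
      rw [dif_pos (by simpa using i.isLt), dif_pos (by simpa using i.isLt)]
      rfl
    rw [Finset.sum_congr rfl (fun i _ => this i)]
    calc ∑ i : Fin (2*m+1), |c m j (((i:ℕ) : ZMod (2*m+1))) - c m k (((i:ℕ) : ZMod (2*m+1)))|
        = ∑ s ∈ Finset.range (2*m+1),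
            |c m j ((s : ZMod (2*m+1))) - c m k ((s : ZMod (2*m+1)))| :=
          Fin.sum_univ_eq_sum_range
            (fun s => |c m j ((s : ZMod (2*m+1))) - c m k ((s : ZMod (2*m+1)))|) (2*m+1)
      _ = ∑ t : ZMod (2*m+1), |c m j t - c m k t| :=
          (zmod_sum_range (2*m+1) (fun t => |c m j t - c m k t|)).symm
      _ = 2 * ((k - j).val : ℤ) := zmod_hamming m hm j k hd
  rw [step1, step2, hlast1, hlast2, hmain]
  by_cases hab : a = b <;> simp [hab] <;> ring

-- adjacency in the cycle
lemma cycle_adj (m : ℕ) (hm : 1 ≤ m) (j : ZMod (2*m+1)) :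
    (cycleGraph (2*m+1)).Adj j (j + 1) := by
  haveI : Fact (1 < 2*m+1) := ⟨by omega⟩
  simp only [cycleGraph, SimpleGraph.fromRel_adj]
  refine ⟨fun h => ?_, Or.inr trivial⟩
  have h0 : (1 : ZMod (2*m+1)) = 0 := by rwa [left_eq_add] at h
  exact one_ne_zero h0

lemma walk_exists (m : ℕ) (hm : 1 ≤ m) (j : ZMod (2*m+1)) (t : ℕ) :
    ∃ w : (cycleGraph (2*m+1)).Walk j (j + (t : ZMod (2*m+1))), w.length = t := by
  induction t with
  | zero => exact ⟨SimpleGraph.Walk.nil.copy rfl (by simp), by simp⟩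
  | succ t ih =>
    obtain ⟨w, hw⟩ := ih
    refine ⟨(w.concat (cycle_adj m hm _)).copy rfl (by push_cast; ring), ?_⟩
    simp [SimpleGraph.Walk.length_concat, hw]

lemma cycle_walk (m : ℕ) (hm : 1 ≤ m) (j k : ZMod (2*m+1)) :
    ∃ w : (cycleGraph (2*m+1)).Walk j k, w.length = (k - j).val := by
  obtain ⟨w, hw⟩ := walk_exists m hm j (k - j).val
  have h : j + (((k - j).val : ℕ) : ZMod (2*m+1)) = k := by
    rw [ZMod.natCast_rightInverse (k - j)]; ring
  exact ⟨w.copy rfl h, by simpa using hw⟩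

lemma prism_walk (m : ℕ) (hm : 1 ≤ m) (j k : ZMod (2*m+1)) (a b : Fin 2) :
    ∃ w : ((cycleGraph (2*m+1)).boxProd (⊤ : SimpleGraph (Fin 2))).Walk (j,a) (k,b),
      w.length = (k - j).val + (if a = b then 0 else 1) := by
  obtain ⟨w, hw⟩ := cycle_walk m hm j k
  by_cases hab : a = b
  · subst hab
    refine ⟨w.boxProdLeft (⊤ : SimpleGraph (Fin 2)) a, ?_⟩
    simp [SimpleGraph.Walk.boxProdLeft, SimpleGraph.Walk.length_map, hw]
    exact (SimpleGraph.Walk.length_map _ _).trans hw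
  · have hadj : ((cycleGraph (2*m+1)).boxProd (⊤ : SimpleGraph (Fin 2))).Adj (k,a) (k,b) := by
      rw [SimpleGraph.boxProd_adj]
      exact Or.inr ⟨hab, rfl⟩
    refine ⟨(w.boxProdLeft (⊤ : SimpleGraph (Fin 2)) a).append
      (SimpleGraph.Walk.cons hadj SimpleGraph.Walk.nil), ?_⟩
    simp [SimpleGraph.Walk.boxProdLeft, SimpleGraph.Walk.length_map,
      SimpleGraph.Walk.length_append, hw, hab]
    show ((w.boxProdLeft (⊤ : SimpleGraph (Fin 2)) a).append
      (SimpleGraph.Walk.cons hadj SimpleGraph.Walk.nil)).length = _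
    rw [SimpleGraph.Walk.length_append, SimpleGraph.Walk.length_cons, SimpleGraph.Walk.length_nil,
      show (w.boxProdLeft (⊤ : SimpleGraph (Fin 2)) a).length = w.length from
        SimpleGraph.Walk.length_map _ _, hw]

lemma edge_hamming (m : ℕ) (hm : 1 ≤ m) (u v : ZMod (2*m+1) × Fin 2)
    (h : ((cycleGraph (2*m+1)).boxProd (⊤ : SimpleGraph (Fin 2))).Adj u v) :
    ∑ i : Fin (2*m+3), |F m u i - F m v i| ≤ 2 := by
  haveI : Fact (1 < 2*m+1) := ⟨by omega⟩
  obtain ⟨j, a⟩ := u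
  obtain ⟨k, b⟩ := v
  rw [SimpleGraph.boxProd_adj] at h
  rcases h with ⟨hc, hab⟩ | ⟨hab, hjk⟩
  · -- cycle edge
    simp only at hab
    subst hab
    simp only [cycleGraph, SimpleGraph.fromRel_adj] at hc
    rcases hc.2 with h1 | h1
    · -- j = k + 1
      have hv : (j - k).val = 1 := by rw [h1]; simp [ZMod.val_one]
      have := hamming_eq m hm k j a a (by rw [hv]; exact hm)
      calc ∑ i : Fin (2*m+3), |F m (j,a) i - F m (k,a) i|
          = ∑ i : Fin (2*m+3), |F m (k,a) i - F m (j,a) i| := by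
            refine Finset.sum_congr rfl (fun i _ => abs_sub_comm _ _)
        _ ≤ 2 := by rw [this, hv]; simp
    · -- k = j + 1
      have hv : (k - j).val = 1 := by rw [h1]; simp [ZMod.val_one]
      have := hamming_eq m hm j k a a (by rw [hv]; exact hm)
      rw [this, hv]; simp
  · -- K2 edge
    simp only at hjk
    subst hjk
    have hz : (j - j).val = 0 := by simp
    have := hamming_eq m hm j j a b (by rw [hz]; omega)
    rw [this, hz]
    by_cases hab2 : a = b <;> simp [hab2]

lemma hamming_le_two_mul_length (m : ℕ) (hm : 1 ≤ m) {u v : ZMod (2*m+1) × Fin 2}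
    (w : ((cycleGraph (2*m+1)).boxProd (⊤ : SimpleGraph (Fin 2))).Walk u v) :
    ∑ i : Fin (2*m+3), |F m u i - F m v i| ≤ 2 * (w.length : ℤ) := by
  induction w with
  | nil => simp
  | @cons x y z hadj p ih =>
    calc ∑ i : Fin (2*m+3), |F m x i - F m z i|
        ≤ ∑ i : Fin (2*m+3), (|F m x i - F m y i| + |F m y i - F m z i|) := by
          refine Finset.sum_le_sum (fun i _ => ?_)
          exact abs_sub_le _ _ _
      _ = (∑ i : Fin (2*m+3), |F m x i - F m y i|)
            + ∑ i : Fin (2*m+3), |F m y i - F m z i| := Finset.sum_add_distrib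
      _ ≤ 2 + 2 * (p.length : ℤ) := by
          exact add_le_add (edge_hamming m hm x y hadj) ih
      _ = 2 * ((SimpleGraph.Walk.cons hadj p).length : ℤ) := by
          simp [SimpleGraph.Walk.length_cons]; push_cast; ring

lemma main_case (m : ℕ) (hm : 1 ≤ m) (j k : ZMod (2*m+1)) (a b : Fin 2)
    (hd : (k - j).val ≤ m) :
    2 * ((((cycleGraph (2*m+1)).boxProd (⊤ : SimpleGraph (Fin 2))).dist (j,a) (k,b) : ℤ))
      = ∑ i : Fin (2*m+3), |F m (j,a) i - F m (k,b) i| := by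
  set G := (cycleGraph (2*m+1)).boxProd (⊤ : SimpleGraph (Fin 2)) with hG
  set e : ℕ := if a = b then 0 else 1 with he
  obtain ⟨w, hw⟩ := prism_walk m hm j k a b
  have hdistle : G.dist (j,a) (k,b) ≤ (k - j).val + e := by
    calc G.dist (j,a) (k,b) ≤ w.length := SimpleGraph.dist_le w
      _ = (k - j).val + e := hw
  have hreach : G.Reachable (j,a) (k,b) := ⟨w⟩
  obtain ⟨p, hp⟩ := hreach.exists_walk_length_eq_dist
  have hham : ∑ i : Fin (2*m+3), |F m (j,a) i - F m (k,b) i|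
      = 2 * ((k - j).val : ℤ) + 2 * (e : ℤ) := by
    rw [hamming_eq m hm j k a b hd]
    by_cases hab : a = b <;> simp [he, hab]
  have hle : ∑ i : Fin (2*m+3), |F m (j,a) i - F m (k,b) i|
      ≤ 2 * (G.dist (j,a) (k,b) : ℤ) := by
    calc ∑ i : Fin (2*m+3), |F m (j,a) i - F m (k,b) i|
        ≤ 2 * (p.length : ℤ) := hamming_le_two_mul_length m hm p
      _ = 2 * (G.dist (j,a) (k,b) : ℤ) := by rw [hp]
  rw [hham]
  rw [hham] at hle
  have h1 : ((k - j).val : ℤ) + (e : ℤ) ≤ (G.dist (j,a) (k,b) : ℤ) := by omega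
  have h2 : (G.dist (j,a) (k,b) : ℤ) ≤ ((k - j).val : ℤ) + (e : ℤ) := by
    exact_mod_cast hdistle
  omega

end OddPrismAux

/-- For `m ≥ 1`, the odd prism `C_{2m+1} □ K_2` embeds with scale 2
into the hypercube `H_{2m+3} ⊆ ℤ^{2m+3}` (all coordinates in `{0,1}`). -/
theorem odd_prism_embeds_hypercube (m : ℕ) (hm : 1 ≤ m) :
    ∃ f : ZMod (2 * m + 1) × Fin 2 → Fin (2 * m + 3) → ℤ,
      (∀ v i, f v i = 0 ∨ f v i = 1) ∧
      ∀ u v : ZMod (2 * m + 1) × Fin 2,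
        2 * (((cycleGraph (2 * m + 1)).boxProd (⊤ : SimpleGraph (Fin 2))).dist u v : ℤ) =
          ∑ i, |f u i - f v i| := by
  haveI : NeZero (2*m+1) := ⟨by omega⟩
  refine ⟨OddPrismAux.F m, ?_, ?_⟩
  · intro v i
    unfold OddPrismAux.F OddPrismAux.c
    split_ifs with h1 h2
    · right; rfl
    · left; rfl
    · have : (v.2 : ℕ) = 0 ∨ (v.2 : ℕ) = 1 := by omega
      rcases this with h | h <;> rw [h] <;> simp
  · intro u v
    obtain ⟨j, a⟩ := u
    obtain ⟨k, b⟩ := v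
    rcases le_or_gt (k - j).val m with hd | hd
    · exact OddPrismAux.main_case m hm j k a b hd
    · have hne : k - j ≠ 0 := by
        intro h
        rw [h] at hd
        simp at hd
      have hv : (j - k).val = (2*m+1) - (k - j).val := by
        have : j - k = -(k - j) := by ring
        rw [this, ZMod.neg_val, if_neg hne]
      have hd2 : (j - k).val ≤ m := by
        have := ZMod.val_lt (k - j)
        omega
      have := OddPrismAux.main_case m hm k j b a hd2
      rw [SimpleGraph.dist_comm]
      rw [this]
      exact Finset.sum_congr rfl (fun i _ => abs_sub_comm _ _)
end

section
/- For every n ≥ 4, the antiprism graph on 2n vertices admits an embedding with scale 2 into ℤ^{n+1} in which every coordinate of the image of every vertex lies in {0,1} (i.e., Antiprism_n embeds with scale 2 into the hypercube H_{n+1}). -/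
/-!
Number the vertex `(r, i)` of the antiprism by its position `2 i + r` on a cycle of length `2n`;
two vertices are then adjacent exactly when their positions are at cyclic distance 1 or 2. The cycle
`C_{2n}` embeds isometrically into `H_n`: coordinate `j < n` records whether a position lies in the
half-cycle `[j, j + n)`. Appending the parity of the position turns the cyclic distance `t` into
`t + (t mod 2) = 2 ⌈t / 2⌉`, twice the antiprism distance.

Instead of computing distances, we check that the Hamming distance `D` of these codes is 2
along edges, and that from any `u ≠ v` one step along the shorter arc reaches a neighbour `w`
lying between `u` and `v` in the hypercube, so that `D u v = D w v + 2`. These two facts force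
`D = 2 · dist`.
-/

/-- The antiprism graph on `Fin 2 × ZMod n`: `(0,i)` is adjacent to `(0, i±1)`,
`(1,i)` is adjacent to `(1, i±1)`, and `(0,i)` is adjacent to `(1,i)` and `(1,i-1)`. -/
def antiprismGraph (n : ℕ) : SimpleGraph (Fin 2 × ZMod n) :=
  SimpleGraph.fromRel (fun p q =>
    (p.1 = q.1 ∧ p.2 = q.2 + 1) ∨
    (p.1 = 0 ∧ q.1 = 1 ∧ (p.2 = q.2 ∨ p.2 = q.2 + 1)))

open Finset

namespace SimpleGraph

variable {V : Type*} {G : SimpleGraph V} {D : V → V → ℕ} {c : ℕ}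

lemma le_mul_length_of_adj_le (hself : ∀ x, D x x = 0)
    (htri : ∀ x y z, D x z ≤ D x y + D y z) (hadj : ∀ x y, G.Adj x y → D x y ≤ c)
    {x y : V} (p : G.Walk x y) : D x y ≤ c * p.length := by
  induction p with
  | nil => simp [hself]
  | @cons x y z h p ih =>
    calc D x z ≤ D x y + D y z := htri x y z
      _ ≤ c + c * p.length := add_le_add (hadj x y h) ih
      _ = c * (p.cons h).length := by rw [Walk.length_cons]; ring

lemma exists_walk_mul_length_le (hc : 0 < c)
    (hdesc : ∀ x y, x ≠ y → ∃ z, G.Adj x z ∧ D z y + c ≤ D x y) (x y : V) :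
    ∃ p : G.Walk x y, c * p.length ≤ D x y := by
  induction hd : D x y using Nat.strong_induction_on generalizing x with
  | _ d ih =>
    by_cases hxy : x = y
    · subst hxy
      exact ⟨.nil, by simp⟩
    obtain ⟨z, hxz, hz⟩ := hdesc x y hxy
    obtain ⟨p, hp⟩ := ih (D z y) (by omega) z rfl
    refine ⟨p.cons hxz, ?_⟩
    rw [Walk.length_cons, mul_add_one]
    omega

theorem eq_mul_dist_of_descent (hc : 0 < c) (hself : ∀ x, D x x = 0)
    (htri : ∀ x y z, D x z ≤ D x y + D y z) (hadj : ∀ x y, G.Adj x y → D x y ≤ c)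
    (hdesc : ∀ x y, x ≠ y → ∃ z, G.Adj x z ∧ D z y + c ≤ D x y) (x y : V) :
    D x y = c * G.dist x y := by
  obtain ⟨p, hp⟩ := exists_walk_mul_length_le hc hdesc x y
  obtain ⟨q, hq⟩ := Reachable.exists_walk_length_eq_dist ⟨p⟩
  have hle : D x y ≤ c * G.dist x y := hq ▸ le_mul_length_of_adj_le hself htri hadj q
  have hge : c * G.dist x y ≤ c * p.length := Nat.mul_le_mul_left c (dist_le p)
  omega

end SimpleGraph

section Hamming

variable {ι : Type*} [Fintype ι] {β : ι → Type*} [∀ i, DecidableEq (β i)]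

lemma hammingDist_eq_add_of_between {x y z : ∀ i, β i} (h : ∀ i, x i ≠ y i → y i = z i) :
    hammingDist x z = hammingDist x y + hammingDist y z := by
  classical
  unfold hammingDist
  rw [← card_union_of_disjoint (disjoint_filter.2 fun i _ hxy hyz => hyz (h i hxy))]
  congr 1
  ext i
  simp only [mem_filter, mem_union, mem_univ, true_and]
  grind

lemma hammingDist_eq_two {x y : ∀ i, β i} {i j : ι} (hij : i ≠ j)
    (h : ∀ k, x k ≠ y k ↔ k = i ∨ k = j) : hammingDist x y = 2 := by
  classical
  unfold hammingDist
  rw [show ({k | x k ≠ y k} : Finset ι) = {i, j} by ext k; simp [h], card_pair hij]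

lemma sum_abs_sub_toNat_eq_hammingDist (x y : ι → Bool) :
    ∑ i, |((x i).toNat : ℤ) - (y i).toNat| = hammingDist x y := by
  rw [hammingDist, card_filter]
  push_cast
  refine sum_congr rfl fun i _ => ?_
  cases x i <;> cases y i <;> rfl

end Hamming

namespace Nat

lemma exists_lt_of_lt_three_mul {n m : ℕ} (h : m < 3 * n) :
    ∃ c < n, m = c ∨ m = c + n ∨ m = c + 2 * n := by
  refine ⟨m % n, Nat.mod_lt _ (by omega), ?_⟩
  have hdiv := Nat.div_add_mod m n
  have hq : m / n < 3 := Nat.div_lt_of_lt_mul (by linarith)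
  interval_cases m / n <;> omega

lemma exists_lt_eq_add_or_add_eq {m a s : ℕ} (ha : a < m) (hs : s ≤ m) :
    ∃ a' < m, a' = a + s ∨ a' + m = a + s := by
  by_cases h : a + s < m
  · exact ⟨a + s, h, .inl rfl⟩
  · exact ⟨a + s - m, by omega, .inr (by omega)⟩

end Nat

section Cycle

variable {n a b : ℕ}

def cycleCode (n a : ℕ) : Fin (n + 1) → Bool := fun j =>
  if (j : ℕ) < n then decide ((j : ℕ) ≤ a ∧ a < j + n) else decide (a % 2 = 1)

/-- For `a, b < 2n`: the positions `a` and `b` are at distance 1 or 2 on the cycle `ℤ / 2n`. -/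
def CycleSqAdj (n a b : ℕ) : Prop :=
  ∃ k, (k = 1 ∨ k = 2) ∧
    ((b = a + k ∨ b + 2 * n = a + k) ∨ (a = b + k ∨ a + 2 * n = b + k))

lemma hammingDist_cycleCode_of_shift {k : ℕ} (ha : a < 2 * n) (hb : b < 2 * n) (hab : a ≠ b)
    (hk : k = 1 ∨ k = 2) (hs : b = a + k ∨ b + 2 * n = a + k) :
    hammingDist (cycleCode n a) (cycleCode n b) = 2 := by
  -- the step flips coordinate `(a + 1) mod n`, and then the parity bit if `k = 1`,
  -- coordinate `(a + 2) mod n` if `k = 2`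
  obtain ⟨c₁, hc₁, hc₁'⟩ := Nat.exists_lt_of_lt_three_mul (show a + 1 < 3 * n by omega)
  rcases hk with rfl | rfl
  · refine hammingDist_eq_two (i := ⟨c₁, by omega⟩) (j := Fin.last n)
      (by simp only [ne_eq, Fin.ext_iff, Fin.val_last]; omega) fun j => ?_
    have := j.isLt
    simp only [cycleCode, ne_eq, Fin.ext_iff, Fin.val_last]
    split_ifs <;> simp only [decide_eq_decide] <;> omega
  · obtain ⟨c₂, hc₂, hc₂'⟩ := Nat.exists_lt_of_lt_three_mul (show a + 2 < 3 * n by omega)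
    refine hammingDist_eq_two (i := ⟨c₁, by omega⟩) (j := ⟨c₂, by omega⟩)
      (by simp only [ne_eq, Fin.ext_iff]; omega) fun j => ?_
    have := j.isLt
    simp only [cycleCode, ne_eq, Fin.ext_iff]
    split_ifs <;> simp only [decide_eq_decide] <;> omega

lemma hammingDist_cycleCode_of_cycleSqAdj (ha : a < 2 * n) (hb : b < 2 * n) (hab : a ≠ b)
    (h : CycleSqAdj n a b) : hammingDist (cycleCode n a) (cycleCode n b) = 2 := by
  obtain ⟨k, hk, hs | hs⟩ := h
  · exact hammingDist_cycleCode_of_shift ha hb hab hk hs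
  · rw [hammingDist_comm]
    exact hammingDist_cycleCode_of_shift hb ha hab.symm hk hs

lemma exists_cycleSqAdj_between (ha : a < 2 * n) (hb : b < 2 * n) (hab : a ≠ b) :
    ∃ a' < 2 * n, a' ≠ a ∧ CycleSqAdj n a a' ∧
      ∀ j, cycleCode n a j ≠ cycleCode n a' j → cycleCode n a' j = cycleCode n b j := by
  -- step from `a` towards `b` along the shorter arc, by 1 or 2 as the offset is odd or even
  obtain ⟨k, hk, hpar⟩ : ∃ k, (k = 1 ∨ k = 2) ∧ (a % 2 = b % 2 ↔ k = 2) := by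
    by_cases h : a % 2 = b % 2
    · exact ⟨2, by omega⟩
    · exact ⟨1, by omega⟩
  obtain ⟨a', ha', hs⟩ := Nat.exists_lt_eq_add_or_add_eq ha
    (s := if (a < b ∧ b ≤ a + n) ∨ (b < a ∧ b + n ≤ a) then k else 2 * n - k)
    (by split_ifs <;> omega)
  refine ⟨a', ha', by split_ifs at hs <;> omega, ⟨k, hk, by split_ifs at hs <;> omega⟩,
    fun j => ?_⟩
  have := j.isLt
  simp only [cycleCode, ne_eq]
  split_ifs at hs ⊢ <;> simp only [decide_eq_decide] <;> omega

end Cycle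

lemma ZMod.eq_add_one_iff_val {n : ℕ} [NeZero n] {i j : ZMod n} :
    j = i + 1 ↔ j.val = i.val + 1 ∨ j.val + n = i.val + 1 := by
  have hval : (i + 1).val = (i.val + 1) % n := by
    rw [← ZMod.val_natCast, Nat.cast_add, ZMod.natCast_zmod_val, Nat.cast_one]
  have hi := i.val_lt
  have hj := j.val_lt
  rw [← (ZMod.val_injective n).eq_iff, hval]
  by_cases h : i.val + 1 < n
  · rw [Nat.mod_eq_of_lt h]
    omega
  · rw [show i.val + 1 = n by omega, Nat.mod_self]
    omega

namespace Antiprism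

variable {n : ℕ}

def pos (u : Fin 2 × ZMod n) : ℕ := 2 * u.2.val + u.1.val

def code (u : Fin 2 × ZMod n) : Fin (n + 1) → Bool := cycleCode n (pos u)

lemma pos_lt [NeZero n] (u : Fin 2 × ZMod n) : pos u < 2 * n := by
  have := u.2.val_lt
  have := u.1.isLt
  unfold pos
  omega

lemma pos_injective [NeZero n] : Function.Injective (pos (n := n)) := by
  rintro ⟨r, i⟩ ⟨s, j⟩ h
  have := r.isLt
  have := s.isLt
  simp only [pos] at h
  rw [Prod.mk.injEq, Fin.ext_iff, ← (ZMod.val_injective n).eq_iff]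
  omega

lemma exists_pos_eq {a : ℕ} (ha : a < 2 * n) : ∃ u : Fin 2 × ZMod n, pos u = a :=
  ⟨(⟨a % 2, by omega⟩, ((a / 2 : ℕ) : ZMod n)), by
    simp only [pos, ZMod.val_cast_of_lt (show a / 2 < n by omega)]
    omega⟩

lemma adj_iff [NeZero n] {u v : Fin 2 × ZMod n} :
    (antiprismGraph n).Adj u v ↔ pos u ≠ pos v ∧ CycleSqAdj n (pos u) (pos v) := by
  rw [antiprismGraph, SimpleGraph.fromRel_adj, pos_injective.ne_iff]
  obtain ⟨⟨r, hr⟩, i⟩ := u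
  obtain ⟨⟨s, hs⟩, j⟩ := v
  have := i.val_lt
  have := j.val_lt
  simp only [ZMod.eq_add_one_iff_val]
  simp only [pos, CycleSqAdj, Fin.ext_iff, ← (ZMod.val_injective n).eq_iff,
    exists_eq_or_imp, exists_eq_left, Fin.val_zero, Fin.val_one]
  refine and_congr_right fun _ => ?_
  omega

lemma hammingDist_code_of_adj [NeZero n] {u v : Fin 2 × ZMod n}
    (h : (antiprismGraph n).Adj u v) : hammingDist (code u) (code v) = 2 := by
  obtain ⟨hne, hadj⟩ := adj_iff.1 h
  exact hammingDist_cycleCode_of_cycleSqAdj (pos_lt u) (pos_lt v) hne hadj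

lemma exists_adj_hammingDist_code_add_two [NeZero n] {u v : Fin 2 × ZMod n} (h : u ≠ v) :
    ∃ w, (antiprismGraph n).Adj u w ∧
      hammingDist (code w) (code v) + 2 = hammingDist (code u) (code v) := by
  obtain ⟨a', ha', hne, hadj, hbetween⟩ :=
    exists_cycleSqAdj_between (pos_lt u) (pos_lt v) (pos_injective.ne h)
  obtain ⟨w, rfl⟩ := exists_pos_eq ha'
  have huw : (antiprismGraph n).Adj u w := adj_iff.2 ⟨hne.symm, hadj⟩
  have hsplit := hammingDist_eq_add_of_between (x := code u) (y := code w) (z := code v) hbetween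
  exact ⟨w, huw, by rw [hsplit, hammingDist_code_of_adj huw, add_comm]⟩

theorem hammingDist_code_eq_two_mul_dist [NeZero n] (u v : Fin 2 × ZMod n) :
    hammingDist (code u) (code v) = 2 * (antiprismGraph n).dist u v :=
  SimpleGraph.eq_mul_dist_of_descent (D := fun u v => hammingDist (code u) (code v)) two_pos
    (fun _ => hammingDist_self _) (fun _ _ _ => hammingDist_triangle _ _ _)
    (fun _ _ h => (hammingDist_code_of_adj h).le)
    (fun _ _ h => (exists_adj_hammingDist_code_add_two h).imp
      fun _ ⟨hadj, hD⟩ => ⟨hadj, hD.le⟩)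
    u v

end Antiprism

/-- For `n ≥ 4`, the antiprism `Antiprism_n` embeds with scale 2
into the hypercube `H_{n+1} ⊆ ℤ^{n+1}` (all coordinates in `{0,1}`). -/
theorem antiprism_embeds_hypercube (n : ℕ) (hn : 4 ≤ n) :
    ∃ f : Fin 2 × ZMod n → Fin (n + 1) → ℤ,
      (∀ v i, f v i = 0 ∨ f v i = 1) ∧
      ∀ u v : Fin 2 × ZMod n,
        2 * ((antiprismGraph n).dist u v : ℤ) = ∑ i, |f u i - f v i| := by
  have : NeZero n := ⟨by omega⟩
  refine ⟨fun u i => (Antiprism.code u i).toNat, fun u i => ?_, fun u v => ?_⟩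
  · cases Antiprism.code u i <;> simp
  · rw [sum_abs_sub_toNat_eq_hammingDist, Antiprism.hammingDist_code_eq_two_mul_dist]
    norm_cast
end

section
/- The rhombic dodecahedron graph admits an embedding with scale 1 into ℤ^4 in which every coordinate of the image of every vertex lies in {0,1} (i.e., the rhombic dodecahedron embeds isometrically into the hypercube H_4). -/
/-- The vertices of the rhombic dodecahedron: the 8 points `(±1, ±1, ±1)` together
with the 6 coordinate permutations of `(±2, 0, 0)`. -/
def RoDoVertex (v : Fin 3 → ℤ) : Prop :=
  (∀ i, |v i| = 1) ∨
  ∃ σ : Equiv.Perm (Fin 3), |v (σ 0)| = 2 ∧ v (σ 1) = 0 ∧ v (σ 2) = 0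

/-- The rhombic dodecahedron graph: vertices as above, adjacent iff the squared
Euclidean distance equals 3. -/
def rhombicDodecahedronGraph : SimpleGraph {v : Fin 3 → ℤ // RoDoVertex v} :=
  SimpleGraph.fromRel (fun v w => ∑ i, (v.val i - w.val i) ^ 2 = 3)
/-!
The edges of the rhombic dodecahedron are parallel to the four body diagonals `tetrahedron k` of
the cube, and crossing an edge parallel to `tetrahedron k` changes the sign of `tetrahedron k ⬝ᵥ v`
and of no other `tetrahedron l ⬝ᵥ v`. So recording these four signs as bits maps adjacent vertices
to bit vectors at Hamming distance one, and every vertex has a neighbour that is one step closer in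
Hamming distance to any given other vertex; hence graph distance equals Hamming distance. Since all
vertices lie in the box `[-2, 2]³`, both facts are finite checks.
-/

namespace SimpleGraph

variable {V : Type*} {G : SimpleGraph V}

theorem le_length_of_le_one_of_adj (d : V → V → ℕ) (hself : ∀ u, d u u = 0)
    (htri : ∀ u v w, d u w ≤ d u v + d v w) (hadj : ∀ u v, G.Adj u v → d u v ≤ 1)
    {u v : V} (p : G.Walk u v) : d u v ≤ p.length := by
  induction p with
  | nil => simp [hself]
  | @cons u w v huw _ ih =>
    have := htri u w v
    have := hadj u w huw
    rw [Walk.length_cons]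
    omega

theorem exists_walk_length_le_of_descent (d : V → V → ℕ)
    (hstep : ∀ u v, u ≠ v → ∃ w, G.Adj u w ∧ d w v < d u v) (u v : V) :
    ∃ p : G.Walk u v, p.length ≤ d u v := by
  induction h : d u v using Nat.strong_induction_on generalizing u with
  | _ n ih =>
    by_cases huv : u = v
    · subst huv
      exact ⟨Walk.nil, by simp⟩
    obtain ⟨w, huw, hw⟩ := hstep u v huv
    obtain ⟨p, hp⟩ := ih _ (h ▸ hw) w rfl
    exact ⟨Walk.cons huw p, by rw [Walk.length_cons]; omega⟩

theorem dist_eq_of_descent (d : V → V → ℕ) (hself : ∀ u, d u u = 0)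
    (htri : ∀ u v w, d u w ≤ d u v + d v w) (hadj : ∀ u v, G.Adj u v → d u v ≤ 1)
    (hstep : ∀ u v, u ≠ v → ∃ w, G.Adj u w ∧ d w v < d u v) (u v : V) :
    G.dist u v = d u v := by
  obtain ⟨p, hp⟩ := exists_walk_length_le_of_descent d hstep u v
  obtain ⟨q, hq⟩ := p.reachable.exists_walk_length_eq_dist
  have := le_length_of_le_one_of_adj d hself htri hadj q
  have := dist_le p
  omega

end SimpleGraph

theorem sum_abs_sub_eq_hammingDist {ι : Type*} [Fintype ι] {x y : ι → ℤ}
    (hx : ∀ i, x i = 0 ∨ x i = 1) (hy : ∀ i, y i = 0 ∨ y i = 1) :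
    ∑ i, |x i - y i| = hammingDist x y := by
  rw [hammingDist, Finset.card_filter]
  push_cast
  refine Finset.sum_congr rfl fun i _ => ?_
  rcases hx i with h | h <;> rcases hy i with h' | h' <;> simp [h, h']

instance : DecidablePred RoDoVertex := fun v => by unfold RoDoVertex; infer_instance

theorem RoDoVertex.mem_Icc {v : Fin 3 → ℤ} (hv : RoDoVertex v) : v ∈ Finset.Icc (-2) 2 := by
  suffices ∀ i, |v i| ≤ 2 by simpa [Pi.le_def, ← forall_and, ← abs_le] using this
  rcases hv with h | ⟨σ, h0, h1, h2⟩
  · exact fun i => (h i).trans_le one_le_two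
  · intro i
    obtain ⟨j, rfl⟩ := σ.surjective i
    fin_cases j <;> simp [h0, h1, h2]

def tetrahedron : Fin 4 → Fin 3 → ℤ := ![![1, 1, 1], ![1, -1, -1], ![-1, 1, -1], ![-1, -1, 1]]

def hypercubeCoord (v : Fin 3 → ℤ) (k : Fin 4) : ℤ := if 0 < tetrahedron k ⬝ᵥ v then 1 else 0

theorem hypercubeCoord_eq_zero_or_one (v : Fin 3 → ℤ) (k : Fin 4) :
    hypercubeCoord v k = 0 ∨ hypercubeCoord v k = 1 := by
  unfold hypercubeCoord
  split_ifs <;> simp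

section RhombicDodecahedron

variable {u v : {v : Fin 3 → ℤ // RoDoVertex v}}

theorem hammingDist_hypercubeCoord_le_one_of_adj (h : rhombicDodecahedronGraph.Adj u v) :
    hammingDist (hypercubeCoord u.1) (hypercubeCoord v.1) ≤ 1 := by
  have key : ∀ u ∈ Finset.Icc (-2 : Fin 3 → ℤ) 2, ∀ v ∈ Finset.Icc (-2 : Fin 3 → ℤ) 2,
      RoDoVertex u → RoDoVertex v → ∑ i, (u i - v i) ^ 2 = 3 →
      hammingDist (hypercubeCoord u) (hypercubeCoord v) ≤ 1 := by
    decide +kernel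
  rw [rhombicDodecahedronGraph, SimpleGraph.fromRel_adj] at h
  obtain ⟨-, h | h⟩ := h
  · exact key _ u.2.mem_Icc _ v.2.mem_Icc u.2 v.2 h
  · exact hammingDist_comm (hypercubeCoord u.1) _ ▸ key _ v.2.mem_Icc _ u.2.mem_Icc v.2 u.2 h

theorem exists_adj_hammingDist_hypercubeCoord_lt (h : u ≠ v) :
    ∃ w, rhombicDodecahedronGraph.Adj u w ∧
      hammingDist (hypercubeCoord w.1) (hypercubeCoord v.1) <
        hammingDist (hypercubeCoord u.1) (hypercubeCoord v.1) := by
  have key : ∀ u ∈ Finset.Icc (-2 : Fin 3 → ℤ) 2, ∀ v ∈ Finset.Icc (-2 : Fin 3 → ℤ) 2,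
      RoDoVertex u → RoDoVertex v → u ≠ v →
      ∃ w ∈ Finset.Icc (-2 : Fin 3 → ℤ) 2, RoDoVertex w ∧ ∑ i, (u i - w i) ^ 2 = 3 ∧
        hammingDist (hypercubeCoord w) (hypercubeCoord v) <
          hammingDist (hypercubeCoord u) (hypercubeCoord v) := by
    decide +kernel
  obtain ⟨w, -, hw, huw, hlt⟩ :=
    key _ u.2.mem_Icc _ v.2.mem_Icc u.2 v.2 (Subtype.coe_injective.ne h)
  refine ⟨⟨w, hw⟩, ?_, hlt⟩
  rw [rhombicDodecahedronGraph, SimpleGraph.fromRel_adj]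
  refine ⟨?_, Or.inl huw⟩
  rintro rfl
  simp at huw

end RhombicDodecahedron

/-- The rhombic dodecahedron graph embeds isometrically (scale 1) into
the hypercube `H_4 ⊆ ℤ^4` (all coordinates in `{0,1}`). -/
theorem rhombicDodecahedron_embeds_hypercube :
    ∃ f : {v : Fin 3 → ℤ // RoDoVertex v} → Fin 4 → ℤ,
      (∀ v i, f v i = 0 ∨ f v i = 1) ∧
      ∀ u v, (rhombicDodecahedronGraph.dist u v : ℤ) = ∑ i, |f u i - f v i| := by
  refine ⟨fun v => hypercubeCoord v.1, fun v => hypercubeCoord_eq_zero_or_one v.1, fun u v => ?_⟩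
  rw [sum_abs_sub_eq_hammingDist (hypercubeCoord_eq_zero_or_one u.1)
    (hypercubeCoord_eq_zero_or_one v.1)]
  exact congrArg Nat.cast <| rhombicDodecahedronGraph.dist_eq_of_descent
    (fun u v => hammingDist (hypercubeCoord u.1) (hypercubeCoord v.1))
    (fun _ => hammingDist_self _) (fun _ _ _ => hammingDist_triangle _ _ _)
    (fun _ _ => hammingDist_hypercubeCoord_le_one_of_adj)
    (fun _ _ => exists_adj_hammingDist_hypercubeCoord_lt) u v
end

section
/- The triangular lattice graph embeds with scale 2 into ℤ^3: the map f(a,b) = (a, b, a+b) satisfies 2·d((a,b),(a',b')) = |a−a'| + |b−b'| + |(a+b)−(a'+b')| for all vertices (a,b), (a',b'), where d is the graph distance of the triangular lattice graph. -/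
/-- The triangular lattice graph on `ℤ × ℤ`: `x` adjacent to `y` iff
`x − y ∈ {±(1,0), ±(0,1), ±(1,−1)}`. -/
def triangularLattice : SimpleGraph (ℤ × ℤ) :=
  SimpleGraph.fromRel (fun x y => x - y = (1, 0) ∨ x - y = (0, 1) ∨ x - y = (1, -1))

namespace TriangularLatticeAux

/-- Hexagonal norm. -/
def Dn (v : ℤ × ℤ) : ℕ := max v.1.natAbs (max v.2.natAbs (v.1 + v.2).natAbs)

lemma adj_iff {x y : ℤ × ℤ} : triangularLattice.Adj x y ↔ x ≠ y ∧
    (x - y = (1, 0) ∨ x - y = (0, 1) ∨ x - y = (1, -1) ∨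
     y - x = (1, 0) ∨ y - x = (0, 1) ∨ y - x = (1, -1)) := by
  simp only [triangularLattice, SimpleGraph.fromRel_adj]
  tauto

lemma adj_delta (x : ℤ × ℤ) (d : ℤ × ℤ)
    (hd : d = (1, 0) ∨ d = (0, 1) ∨ d = (1, -1) ∨ d = (-1, 0) ∨ d = (0, -1) ∨ d = (-1, 1)) :
    triangularLattice.Adj x (x + d) := by
  rw [adj_iff]
  constructor
  · rcases hd with h|h|h|h|h|h <;> subst h <;>
      simp [Prod.ext_iff] <;> intro h <;> omega
  · rcases hd with h|h|h|h|h|h <;> subst h <;>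
      simp [Prod.ext_iff, sub_eq_iff_eq_add] <;> ring_nf <;> simp [Prod.ext_iff] <;> omega

lemma step (x y : ℤ × ℤ) (h : x ≠ y) :
    ∃ x', triangularLattice.Adj x x' ∧ Dn (x' - y) + 1 ≤ Dn (x - y) := by
  set a := x.1 - y.1 with ha
  set b := x.2 - y.2 with hb
  have hab : a ≠ 0 ∨ b ≠ 0 := by
    by_contra hc
    push_neg at hc
    exact h (Prod.ext (by omega) (by omega))
  -- choose a direction d
  have key : ∃ d : ℤ × ℤ,
      (d = (1, 0) ∨ d = (0, 1) ∨ d = (1, -1) ∨ d = (-1, 0) ∨ d = (0, -1) ∨ d = (-1, 1)) ∧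
      Dn (x + d - y) + 1 ≤ Dn (x - y) := by
    have e1 : (x - y).1 = a := rfl
    have e2 : (x - y).2 = b := rfl
    rcases le_or_gt a 0 with ha0 | ha0 <;> rcases le_or_gt b 0 with hb0 | hb0
    · -- a ≤ 0, b ≤ 0, not both 0 : move +(1,0) or +(0,1)
      rcases lt_or_eq_of_le ha0 with ha' | ha'
      · exact ⟨(1, 0), by tauto, by
          simp only [Dn, Prod.fst_add, Prod.snd_add, Prod.fst_sub, Prod.snd_sub]
          simp only [← ha, ← hb]
          omega⟩
      · have hb' : b < 0 := by omega
        exact ⟨(0, 1), by tauto, by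
          simp only [Dn, Prod.fst_add, Prod.snd_add, Prod.fst_sub, Prod.snd_sub]
          simp only [← ha, ← hb]
          omega⟩
    · -- a ≤ 0 < b
      rcases le_or_gt b (-a) with hc | hc
      · -- b ≤ -a : move +(1,-1)
        exact ⟨(1, -1), by tauto, by
          simp only [Dn, Prod.fst_add, Prod.snd_add, Prod.fst_sub, Prod.snd_sub]
          simp only [← ha, ← hb]
          omega⟩
      · -- b > -a : move +(0,-1)
        exact ⟨(0, -1), by tauto, by
          simp only [Dn, Prod.fst_add, Prod.snd_add, Prod.fst_sub, Prod.snd_sub]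
          simp only [← ha, ← hb]
          omega⟩
    · -- b ≤ 0 < a
      rcases le_or_gt a (-b) with hc | hc
      · -- a ≤ -b : move +(-1,1)
        exact ⟨(-1, 1), by tauto, by
          simp only [Dn, Prod.fst_add, Prod.snd_add, Prod.fst_sub, Prod.snd_sub]
          simp only [← ha, ← hb]
          omega⟩
      · exact ⟨(-1, 0), by tauto, by
          simp only [Dn, Prod.fst_add, Prod.snd_add, Prod.fst_sub, Prod.snd_sub]
          simp only [← ha, ← hb]
          omega⟩
    · -- a > 0, b > 0 : move +(-1,0)
      exact ⟨(-1, 0), by tauto, by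
        simp only [Dn, Prod.fst_add, Prod.snd_add, Prod.fst_sub, Prod.snd_sub]
        simp only [← ha, ← hb]
        omega⟩
  obtain ⟨d, hd, hle⟩ := key
  exact ⟨x + d, adj_delta x d hd, hle⟩

lemma exists_walk : ∀ (n : ℕ) (x y : ℤ × ℤ), Dn (x - y) ≤ n →
    ∃ w : triangularLattice.Walk x y, w.length ≤ n := by
  intro n
  induction n with
  | zero =>
    intro x y hxy
    have hx : x = y := by
      simp only [Dn, Nat.le_zero] at hxy
      have h1 : (x - y).1 = 0 := by omega
      have h2 : (x - y).2 = 0 := by omega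
      have : x - y = 0 := Prod.ext h1 h2
      linear_combination (norm := module) this
    subst hx
    exact ⟨SimpleGraph.Walk.nil, by simp⟩
  | succ n ih =>
    intro x y hxy
    by_cases hx : x = y
    · subst hx; exact ⟨SimpleGraph.Walk.nil, by simp⟩
    · obtain ⟨x', hadj, hle⟩ := step x y hx
      obtain ⟨w, hw⟩ := ih x' y (by omega)
      exact ⟨SimpleGraph.Walk.cons hadj w, by simpa using by omega⟩

set_option maxHeartbeats 1000000 in
lemma adj_bound {x y : ℤ × ℤ} (h : triangularLattice.Adj x y) (z : ℤ × ℤ) :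
    Dn (x - z) ≤ Dn (y - z) + 1 := by
  rw [adj_iff] at h
  obtain ⟨-, h⟩ := h
  rcases h with h|h|h|h|h|h <;>
  · have e1 := congrArg Prod.fst h
    have e2 := congrArg Prod.snd h
    simp only [Prod.fst_sub, Prod.snd_sub] at e1 e2
    simp only [Dn, Prod.fst_sub, Prod.snd_sub]
    omega

lemma walk_lower {x y : ℤ × ℤ} (w : triangularLattice.Walk x y) : Dn (x - y) ≤ w.length := by
  induction w with
  | nil => simp [Dn]
  | @cons u v w hadj p ih =>
    have := adj_bound hadj w
    simp only [SimpleGraph.Walk.length_cons]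
    omega

end TriangularLatticeAux

/-- The triangular lattice graph embeds with scale 2 into `ℤ^3` via
`f(a,b) = (a, b, a+b)`. -/
theorem triangularLattice_embeds (x y : ℤ × ℤ) :
    2 * (triangularLattice.dist x y : ℤ) =
      |x.1 - y.1| + |x.2 - y.2| + |(x.1 + x.2) - (y.1 + y.2)| := by
  open TriangularLatticeAux in
  have hdist : triangularLattice.dist x y = Dn (x - y) := by
    obtain ⟨w, hw⟩ := exists_walk (Dn (x - y)) x y le_rfl
    have h1 : triangularLattice.dist x y ≤ Dn (x - y) :=
      le_trans (SimpleGraph.dist_le w) hw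
    have hr : triangularLattice.Reachable x y := ⟨w⟩
    obtain ⟨p, hp⟩ := hr.exists_walk_length_eq_dist
    have h2 : Dn (x - y) ≤ triangularLattice.dist x y := hp ▸ walk_lower p
    omega
  rw [hdist]
  simp only [TriangularLatticeAux.Dn, Prod.fst_sub, Prod.snd_sub]
  push_cast [Int.natCast_natAbs]
  set a := x.1 - y.1
  set b := x.2 - y.2
  have hab : x.1 + x.2 - (y.1 + y.2) = a + b := by ring
  rw [hab]
  have h : x.1 - y.1 + (x.2 - y.2) = a + b := rfl
  rw [h]
  rcases abs_cases a with ⟨h1, _⟩ | ⟨h1, _⟩ <;> rcases abs_cases b with ⟨h2, _⟩ | ⟨h2, _⟩ <;>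
    rcases abs_cases (a + b) with ⟨h3, _⟩ | ⟨h3, _⟩ <;> simp [h1, h2, h3] <;> omega
end

section
/- The skeleton of the Delaunay partition of the face-centered cubic lattice A₃ embeds with scale 2 into ℤ^4: on the graph with vertex set {y ∈ ℤ^4 : y₁ + y₂ + y₃ + y₄ = 0} where y is adjacent to y' iff y − y' = e_i − e_j for some i ≠ j (e_i the standard basis vectors), the graph distance d satisfies 2·d(y, y') = Σ_{i=1}^4 |y_i − y'_i| for all vertices y, y'. -/
/-- The `A₃` lattice graph: vertex set `{y ∈ ℤ^4 : y₁ + y₂ + y₃ + y₄ = 0}`, with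
`y` adjacent to `y'` iff `y − y' = e_i − e_j` for some `i ≠ j`. It is the skeleton
of the octahedron–tetrahedron uniform partition `De(A₃)` of 3-space. -/
def A3Graph : SimpleGraph {y : Fin 4 → ℤ // ∑ i, y i = 0} :=
  SimpleGraph.fromRel (fun y y' =>
    ∃ i j : Fin 4, i ≠ j ∧ y.val - y'.val = Pi.single i 1 - Pi.single j 1)

/-!
An edge `e_i − e_j` has `ℓ¹`-length 2, so by the triangle inequality `Σ |yₖ − y'ₖ| ≤ 2·d(y, y')`.
Conversely, if `y ≠ y'` then `y − y'` has coordinate sum 0, hence a positive coordinate `i` and a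
negative coordinate `j`; the neighbour `y − (e_i − e_j)` is closer to `y'` by exactly 2 in `ℓ¹`,
and iterating this step gives a walk of length `Σ |yₖ − y'ₖ| / 2`.
-/

open Finset

variable {ι : Type*}

theorem exists_lt_of_sum_eq_of_ne [Fintype ι] {M : Type*} [AddCommMonoid M] [LinearOrder M]
    [IsOrderedCancelAddMonoid M] {f g : ι → M} (hsum : ∑ i, f i = ∑ i, g i) (hne : f ≠ g) :
    ∃ i, g i < f i := by
  by_contra! hle
  exact hne (funext fun i => (sum_eq_sum_iff_of_le fun i _ => hle i).mp hsum i (mem_univ i))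

variable [DecidableEq ι]

theorem abs_single_sub_single_apply {i j : ι} (hij : i ≠ j) (k : ι) :
    |(Pi.single i 1 - Pi.single j 1 : ι → ℤ) k| =
      (Pi.single i 1 : ι → ℤ) k + (Pi.single j 1 : ι → ℤ) k := by
  rcases eq_or_ne k i with rfl | hki
  · simp [hij]
  rcases eq_or_ne k j with rfl | hkj
  · simp [hki]
  · simp [hki, hkj]

theorem abs_sub_single_sub_single_apply {d : ι → ℤ} {i j : ι} (hi : 0 < d i) (hj : d j < 0)
    (k : ι) :
    |(d - (Pi.single i 1 - Pi.single j 1) : ι → ℤ) k| =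
      |d k| - ((Pi.single i 1 : ι → ℤ) k + (Pi.single j 1 : ι → ℤ) k) := by
  have hij : i ≠ j := by rintro rfl; omega
  rcases eq_or_ne k i with rfl | hki
  · simp [hij, abs_of_pos hi, abs_of_nonneg (by omega : 0 ≤ d k - 1)]
  rcases eq_or_ne k j with rfl | hkj
  · simp [hki, abs_of_neg hj, abs_of_nonpos (by omega : d k + 1 ≤ 0)]
    ring
  · simp [hki, hkj]

variable [Fintype ι]

theorem sum_abs_single_sub_single {i j : ι} (hij : i ≠ j) :
    ∑ k, |(Pi.single i 1 - Pi.single j 1 : ι → ℤ) k| = 2 := by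
  simp only [abs_single_sub_single_apply hij, sum_add_distrib, sum_pi_single', mem_univ, if_true]
  norm_num

theorem sum_abs_sub_single_sub_single {d : ι → ℤ} {i j : ι} (hi : 0 < d i) (hj : d j < 0) :
    ∑ k, |(d - (Pi.single i 1 - Pi.single j 1) : ι → ℤ) k| + 2 = ∑ k, |d k| := by
  simp only [abs_sub_single_sub_single_apply hi hj, sum_sub_distrib, sum_add_distrib,
    sum_pi_single', mem_univ, if_true]
  ring

/-- The graph of the root lattice `A_{n-1}`, `n = card ι`. -/
def zeroSumLatticeGraph (ι : Type*) [DecidableEq ι] [Fintype ι] :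
    SimpleGraph {y : ι → ℤ // ∑ i, y i = 0} :=
  SimpleGraph.fromRel fun y y' =>
    ∃ i j : ι, i ≠ j ∧ y.val - y'.val = Pi.single i 1 - Pi.single j 1

theorem A3Graph_eq_zeroSumLatticeGraph : A3Graph = zeroSumLatticeGraph (Fin 4) := rfl

namespace zeroSumLatticeGraph

theorem sum_abs_sub_of_adj {y z : {y : ι → ℤ // ∑ i, y i = 0}}
    (h : (zeroSumLatticeGraph ι).Adj y z) : ∑ k, |y.val k - z.val k| = 2 := by
  obtain ⟨-, ⟨i, j, hij, hyz⟩ | ⟨i, j, hij, hzy⟩⟩ := h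
  · change ∑ k, |(y.val - z.val) k| = 2
    rw [hyz]
    exact sum_abs_single_sub_single hij
  · simp_rw [abs_sub_comm (y.val _)]
    change ∑ k, |(z.val - y.val) k| = 2
    rw [hzy]
    exact sum_abs_single_sub_single hij

theorem sum_abs_sub_le_two_mul_length {y y' : {y : ι → ℤ // ∑ i, y i = 0}}
    (w : (zeroSumLatticeGraph ι).Walk y y') :
    ∑ k, |y.val k - y'.val k| ≤ 2 * (w.length : ℤ) := by
  induction w with
  | nil => simp
  | @cons a b c hab _ ih =>
    calc ∑ k, |a.val k - c.val k|
        ≤ ∑ k, (|a.val k - b.val k| + |b.val k - c.val k|) :=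
          sum_le_sum fun k _ => abs_sub_le _ _ _
      _ ≤ 2 * ((SimpleGraph.Walk.cons hab _).length : ℤ) := by
          rw [sum_add_distrib, sum_abs_sub_of_adj hab, SimpleGraph.Walk.length_cons]
          push_cast
          linarith

theorem exists_adj_sum_abs_sub_add_two {y y' : {y : ι → ℤ // ∑ i, y i = 0}} (h : y ≠ y') :
    ∃ z, (zeroSumLatticeGraph ι).Adj y z ∧
      ∑ k, |z.val k - y'.val k| + 2 = ∑ k, |y.val k - y'.val k| := by
  have hsum : ∑ k, y.val k = ∑ k, y'.val k := y.2.trans y'.2.symm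
  have hne : y.val ≠ y'.val := Subtype.coe_ne_coe.mpr h
  obtain ⟨i, hi⟩ := exists_lt_of_sum_eq_of_ne hsum hne
  obtain ⟨j, hj⟩ := exists_lt_of_sum_eq_of_ne hsum.symm hne.symm
  have hij : i ≠ j := by rintro rfl; omega
  refine ⟨⟨y.val - (Pi.single i 1 - Pi.single j 1), ?_⟩, ?_, ?_⟩
  · simp [sum_sub_distrib, y.2]
  · refine ⟨fun hyz => ?_, Or.inl ⟨i, j, hij, by simp⟩⟩
    have hyi := congr_fun (congr_arg Subtype.val hyz) i
    simp [hij] at hyi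
    omega
  · have hz : ∀ k, (y.val - (Pi.single i 1 - Pi.single j 1) : ι → ℤ) k - y'.val k =
        (y.val - y'.val - (Pi.single i 1 - Pi.single j 1) : ι → ℤ) k := fun k => by
      simp only [Pi.sub_apply]; ring
    simp only [hz]
    exact sum_abs_sub_single_sub_single (by simpa using hi) (by simpa using hj)

theorem exists_walk_two_mul_length_eq (y y' : {y : ι → ℤ // ∑ i, y i = 0}) :
    ∃ w : (zeroSumLatticeGraph ι).Walk y y', 2 * (w.length : ℤ) = ∑ k, |y.val k - y'.val k| := by
  by_cases h : y = y'
  · subst h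
    exact ⟨.nil, by simp⟩
  obtain ⟨z, hyz, hz⟩ := exists_adj_sum_abs_sub_add_two h
  have hz_nonneg : 0 ≤ ∑ k, |z.val k - y'.val k| := sum_nonneg fun k _ => abs_nonneg _
  obtain ⟨w, hw⟩ := exists_walk_two_mul_length_eq z y'
  exact ⟨.cons hyz w, by rw [SimpleGraph.Walk.length_cons]; push_cast; omega⟩
termination_by (∑ k, |y.val k - y'.val k|).toNat
decreasing_by omega

theorem two_mul_dist_eq_sum_abs_sub (y y' : {y : ι → ℤ // ∑ i, y i = 0}) :
    2 * ((zeroSumLatticeGraph ι).dist y y' : ℤ) = ∑ k, |y.val k - y'.val k| := by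
  obtain ⟨w, hw⟩ := exists_walk_two_mul_length_eq y y'
  obtain ⟨p, hp⟩ := (SimpleGraph.Walk.reachable w).exists_walk_length_eq_dist
  have hlower := sum_abs_sub_le_two_mul_length p
  have hupper := SimpleGraph.dist_le w
  rw [hp] at hlower
  omega

end zeroSumLatticeGraph

/-- The skeleton of `De(A₃)` embeds with scale 2 into `ℤ^4`:
`2·d(y,y') = Σᵢ |yᵢ − y'ᵢ|`. -/
theorem A3Graph_scale_two_embedding (y y' : {y : Fin 4 → ℤ // ∑ i, y i = 0}) :
    2 * (A3Graph.dist y y' : ℤ) = ∑ i, |y.val i - y'.val i| := by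
  rw [A3Graph_eq_zeroSumLatticeGraph]
  exact zeroSumLatticeGraph.two_mul_dist_eq_sum_abs_sub y y'
end

section
/- The skeleton of the triangular-prismatic uniform partition De(A₂ × ℤ) embeds with scale 2 into ℤ^4: on the graph with vertex set ℤ^3 where x is adjacent to y iff x − y ∈ {±(1,0,0), ±(0,1,0), ±(1,−1,0), ±(0,0,1)}, the map f(a,b,c) = (a, b, a+b, 2c) satisfies 2·d(x, y) = Σ_{i=1}^4 |f(x)_i − f(y)_i| for all vertices x, y, where d is the graph distance. -/
/-!
The graph is the Cayley graph of `ℤ³` for the eight steps `±(1,0,0), ±(0,1,0), ±(1,-1,0),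
±(0,0,1)`, so its distance is the word length of `x - y`. That word length is
`max(|a|, |b|, |a + b|) + |c|`: this is subadditive and equals `1` on every step, and from every
nonzero vector some step decreases it by one. Finally
`2 max(|a|, |b|, |a + b|) = |a| + |b| + |a + b|`: two of `a`, `b`, `-(a + b)` have the same sign,
and as the three sum to zero, the absolute value of the third is the sum of theirs.
-/

/-- The triangular-prismatic graph (skeleton of the uniform partition of 3-space by
triangular prisms, `De(A₂ × ℤ)`): vertex set `ℤ^3`, with `x` adjacent to `y` iff
`x − y ∈ {±(1,0,0), ±(0,1,0), ±(1,−1,0), ±(0,0,1)}`. -/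
def triPrismaticGraph : SimpleGraph (ℤ × ℤ × ℤ) :=
  SimpleGraph.fromRel (fun x y =>
    x - y = (1, 0, 0) ∨ x - y = (0, 1, 0) ∨ x - y = (1, -1, 0) ∨ x - y = (0, 0, 1))

namespace SimpleGraph

variable {V : Type*} (G : SimpleGraph V) {y : V} (φ : V → ℕ)

theorem le_length_of_forall_adj_le (hy : φ y = 0) (hle : ∀ u v, G.Adj u v → φ u ≤ φ v + 1)
    {u : V} (w : G.Walk u y) : φ u ≤ w.length := by
  induction w with
  | nil => simp [hy]
  | cons h p ih => exact (hle _ _ h).trans (by simpa using ih hy)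

theorem exists_walk_length_eq_of_forall_exists_adj (hy : φ y = 0)
    (hdesc : ∀ u, u ≠ y → ∃ v, G.Adj u v ∧ φ v + 1 = φ u) (u : V) :
    ∃ w : G.Walk u y, w.length = φ u := by
  induction hn : φ u using Nat.strong_induction_on generalizing u with
  | _ n ih =>
    by_cases hu : u = y
    · subst hu
      exact ⟨.nil, by simp [← hn, hy]⟩
    · obtain ⟨v, hadj, hv⟩ := hdesc u hu
      obtain ⟨w, hw⟩ := ih (φ v) (by omega) v rfl
      exact ⟨.cons hadj w, by simp [hw, ← hn, hv]⟩

theorem dist_eq_of_forall_adj_le_of_forall_exists_adj (hy : φ y = 0)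
    (hle : ∀ u v, G.Adj u v → φ u ≤ φ v + 1)
    (hdesc : ∀ u, u ≠ y → ∃ v, G.Adj u v ∧ φ v + 1 = φ u) (u : V) :
    G.dist u y = φ u := by
  obtain ⟨w, hw⟩ := G.exists_walk_length_eq_of_forall_exists_adj φ hy hdesc u
  obtain ⟨p, hp⟩ := Reachable.exists_walk_length_eq_dist ⟨w⟩
  exact le_antisymm (hw ▸ G.dist_le w) (hp ▸ G.le_length_of_forall_adj_le φ hy hle p)

end SimpleGraph

namespace TriPrismatic

def steps : Set (ℤ × ℤ × ℤ) :=
  {(1, 0, 0), (-1, 0, 0), (0, 1, 0), (0, -1, 0), (1, -1, 0), (-1, 1, 0), (0, 0, 1), (0, 0, -1)}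

def wordLength (v : ℤ × ℤ × ℤ) : ℕ :=
  max v.1.natAbs (max v.2.1.natAbs (v.1 + v.2.1).natAbs) + v.2.2.natAbs

theorem adj_iff {u v : ℤ × ℤ × ℤ} : triPrismaticGraph.Adj u v ↔ u - v ∈ steps := by
  rw [triPrismaticGraph, SimpleGraph.fromRel_adj, ← neg_sub u v, ← sub_ne_zero]
  generalize u - v = g
  obtain ⟨a, b, c⟩ := g
  simp only [steps, Set.mem_insert_iff, Set.mem_singleton_iff, Prod.neg_mk, Prod.mk.injEq, ne_eq,
    Prod.mk_eq_zero, neg_eq_iff_eq_neg]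
  grind

theorem wordLength_add_le (v w : ℤ × ℤ × ℤ) :
    wordLength (v + w) ≤ wordLength v + wordLength w := by
  obtain ⟨a, b, c⟩ := v
  obtain ⟨a', b', c'⟩ := w
  have hab : a + a' + (b + b') = a + b + (a' + b') := by ring
  simp only [wordLength, Prod.mk_add_mk, hab]
  have := Int.natAbs_add_le a a'
  have := Int.natAbs_add_le b b'
  have := Int.natAbs_add_le (a + b) (a' + b')
  have := Int.natAbs_add_le c c'
  omega

theorem wordLength_eq_one {g : ℤ × ℤ × ℤ} (hg : g ∈ steps) : wordLength g = 1 := by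
  simp only [steps, Set.mem_insert_iff, Set.mem_singleton_iff] at hg
  rcases hg with rfl | rfl | rfl | rfl | rfl | rfl | rfl | rfl <;> rfl

theorem exists_wordLength_sub_add_one {v : ℤ × ℤ × ℤ} (hv : v ≠ 0) :
    ∃ g ∈ steps, wordLength (v - g) + 1 = wordLength v := by
  obtain ⟨a, b, c⟩ := v
  have descend (g : ℤ × ℤ × ℤ) (hg : g ∈ steps)
      (h : wordLength ((a, b, c) - g) + 1 = wordLength (a, b, c)) :
      ∃ g ∈ steps, wordLength ((a, b, c) - g) + 1 = wordLength (a, b, c) := ⟨g, hg, h⟩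
  simp only [ne_eq, Prod.mk_eq_zero] at hv
  rcases lt_trichotomy c 0 with hc | rfl | hc
  · exact descend (0, 0, -1) (by simp [steps]) (by simp only [wordLength, Prod.mk_sub_mk]; omega)
  · rcases lt_trichotomy a 0 with ha | rfl | ha
    · rcases le_or_gt b 0 with hb | hb
      · exact descend (-1, 0, 0) (by simp [steps])
          (by simp only [wordLength, Prod.mk_sub_mk]; omega)
      · exact descend (-1, 1, 0) (by simp [steps])
          (by simp only [wordLength, Prod.mk_sub_mk]; omega)
    · rcases lt_or_gt_of_ne (by omega : b ≠ 0) with hb | hb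
      · exact descend (0, -1, 0) (by simp [steps])
          (by simp only [wordLength, Prod.mk_sub_mk]; omega)
      · exact descend (0, 1, 0) (by simp [steps])
          (by simp only [wordLength, Prod.mk_sub_mk]; omega)
    · rcases le_or_gt 0 b with hb | hb
      · exact descend (1, 0, 0) (by simp [steps])
          (by simp only [wordLength, Prod.mk_sub_mk]; omega)
      · exact descend (1, -1, 0) (by simp [steps])
          (by simp only [wordLength, Prod.mk_sub_mk]; omega)
  · exact descend (0, 0, 1) (by simp [steps]) (by simp only [wordLength, Prod.mk_sub_mk]; omega)

theorem dist_eq_wordLength_sub (x y : ℤ × ℤ × ℤ) :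
    triPrismaticGraph.dist x y = wordLength (x - y) := by
  refine triPrismaticGraph.dist_eq_of_forall_adj_le_of_forall_exists_adj
    (fun u ↦ wordLength (u - y)) (by simp [wordLength]) (fun u v huv ↦ ?_) (fun u hu ↦ ?_) x
  · have := wordLength_add_le (v - y) (u - v)
    rwa [sub_add_sub_cancel', wordLength_eq_one (adj_iff.mp huv)] at this
  · obtain ⟨g, hg, hdesc⟩ := exists_wordLength_sub_add_one (sub_ne_zero.mpr hu)
    refine ⟨u - g, adj_iff.mpr (by simpa using hg), ?_⟩
    rwa [sub_right_comm]

theorem two_mul_wordLength (v : ℤ × ℤ × ℤ) :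
    2 * (wordLength v : ℤ) = |v.1| + |v.2.1| + |v.1 + v.2.1| + 2 * |v.2.2| := by
  simp only [wordLength, Int.abs_eq_natAbs]
  omega

end TriPrismatic

/-- The skeleton of `De(A₂ × ℤ)` embeds with scale 2 into `ℤ^4` via
`f(a,b,c) = (a, b, a+b, 2c)`. -/
theorem triPrismaticGraph_scale_two_embedding (x y : ℤ × ℤ × ℤ) :
    2 * (triPrismaticGraph.dist x y : ℤ) =
      |x.1 - y.1| + |x.2.1 - y.2.1| + |(x.1 + x.2.1) - (y.1 + y.2.1)| +
        |2 * x.2.2 - 2 * y.2.2| := by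
  rw [TriPrismatic.dist_eq_wordLength_sub, TriPrismatic.two_mul_wordLength, ← mul_sub, abs_mul,
    abs_two]
  simp only [Prod.fst_sub, Prod.snd_sub, add_sub_add_comm]
end
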